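/- arXiv:1911.03432 — 8 statements merged into one kernel-verified Lean document; each statement's English description precedes it below -/
import Mathlib

section
/- Let f : ℝⁿ × ℝᵐ → ℝ and h : ℝⁿ × ℝᵐ → ℝᵖ be continuously differentiable and g : ℝⁿ × ℝᵐ → ℝ be twice continuously differentiable, and let g̃(u,v) := (h(u,v), ∇_v g(u,v)) ∈ ℝᵖ × ℝᵐ be the combined constraint map. Suppose {ε_k} is a sequence of positive reals with ε_k → 0, {γ_k} is a sequence of positive, non-decreasing reals with γ_k → ∞, and {(u_k, v_k)} is a sequence satisfying the tolerance condition ‖∇_u f̃(u_k,v_k;γ_k)‖² + ‖∇_v f̃(u_k,v_k;γ_k)‖² ≤ ε_k² for all k. If (ū,v̄) is the limit of some subsequence of {(u_k,v_k)} and the derivative D g̃(ū,v̄) : ℝⁿ × ℝᵐ → ℝᵖ × ℝᵐ is surjective (LICQ), then (ū,v̄) satisfies the KKT conditions of the problem min f(u,v) subject to h(u,v)=0 and ∇_v g(u,v)=0; that is, h(ū,v̄)=0, ∇_v g(ū,v̄)=0, and there exists μ ∈ ℝᵖ × ℝᵐ such that ∇f(ū,v̄) = (D g̃(ū,v̄))*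 μ. -/
open scoped Topology
open Filter

noncomputable section

/-- The combined constraint map `g̃(u,v) := (h(u,v), ∇_v g(u,v)) ∈ ℝᵖ × ℝᵐ`, viewed as a
map between the Euclidean (ℓ²) product spaces `ℝⁿ × ℝᵐ` and `ℝᵖ × ℝᵐ`. -/
def combinedConstraint {n m p : ℕ}
    (h : EuclideanSpace ℝ (Fin n) → EuclideanSpace ℝ (Fin m) → EuclideanSpace ℝ (Fin p))
    (g : EuclideanSpace ℝ (Fin n) → EuclideanSpace ℝ (Fin m) → ℝ)
    (w : WithLp 2 (EuclideanSpace ℝ (Fin n) × EuclideanSpace ℝ (Fin m))) :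
    WithLp 2 (EuclideanSpace ℝ (Fin p) × EuclideanSpace ℝ (Fin m)) :=
  (WithLp.equiv 2 _).symm
    (h ((WithLp.equiv 2 _) w).1 ((WithLp.equiv 2 _) w).2,
      gradient (g ((WithLp.equiv 2 _) w).1) ((WithLp.equiv 2 _) w).2)

section Aux

variable {E F : Type*}
  [NormedAddCommGroup E] [InnerProductSpace ℝ E]
  [NormedAddCommGroup F] [InnerProductSpace ℝ F] [CompleteSpace E] [CompleteSpace F]
  [CompleteSpace (WithLp 2 (E × F))]

/-- `(toDual ℝ F).symm` as a continuous `ℝ`-linear map. -/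
noncomputable def toDualSymmL (F : Type*) [NormedAddCommGroup F] [InnerProductSpace ℝ F]
    [CompleteSpace F] : (F →L[ℝ] ℝ) →L[ℝ] F where
  toLinearMap :=
    { toFun := fun D => (InnerProductSpace.toDual ℝ F).symm D
      map_add' := fun a b => by simp
      map_smul' := fun c D => by
        simp [LinearIsometryEquiv.map_smulₛₗ] }
  cont := (InnerProductSpace.toDual ℝ F).symm.continuous

@[simp] lemma toDualSymmL_apply (F : Type*) [NormedAddCommGroup F] [InnerProductSpace ℝ F]
    [CompleteSpace F] (D : F →L[ℝ] ℝ) :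
    toDualSymmL F D = (InnerProductSpace.toDual ℝ F).symm D := rfl

omit [CompleteSpace F] in
/-- Partial gradient in the first variable is the first component of the full gradient. -/
theorem HasGradientAt.withLp_fst {φ : WithLp 2 (E × F) → ℝ} {s w : WithLp 2 (E × F)}
    (hφ : HasGradientAt φ s w) :
    HasGradientAt (fun u : E => φ ((WithLp.equiv 2 (E × F)).symm (u, w.snd))) s.fst w.fst := by
  have h1 : HasFDerivAt φ (InnerProductSpace.toDual ℝ _ s) w := hφ.hasFDerivAt
  have hι : HasFDerivAt (fun u : E => (WithLp.equiv 2 (E × F)).symm (u, w.snd))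
      ((((WithLp.prodContinuousLinearEquiv 2 ℝ E F).symm :
          (E × F) →L[ℝ] WithLp 2 (E × F))).comp (ContinuousLinearMap.inl ℝ E F)) w.fst :=
    ((WithLp.prodContinuousLinearEquiv 2 ℝ E F).symm.hasFDerivAt).comp _
      (hasFDerivAt_prodMk_left w.fst w.snd)
  have h2 := h1.comp w.fst hι
  have h3 : (InnerProductSpace.toDual ℝ (WithLp 2 (E × F)) s).comp
      ((((WithLp.prodContinuousLinearEquiv 2 ℝ E F).symm :
          (E × F) →L[ℝ] WithLp 2 (E × F))).comp (ContinuousLinearMap.inl ℝ E F))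
      = InnerProductSpace.toDual ℝ E s.fst := by
    ext u
    simp only [ContinuousLinearMap.comp_apply, ContinuousLinearMap.inl_apply,
      InnerProductSpace.toDual_apply_apply, ContinuousLinearEquiv.coe_coe,
      WithLp.prodContinuousLinearEquiv_symm_apply]
    rw [WithLp.prod_inner_apply]
    simp
  rw [h3] at h2
  simpa [Function.comp_def] using h2.hasGradientAt

omit [CompleteSpace E] in
/-- Partial gradient in the second variable is the second component of the full gradient. -/
theorem HasGradientAt.withLp_snd {φ : WithLp 2 (E × F) → ℝ} {s w : WithLp 2 (E × F)}
    (hφ : HasGradientAt φ s w) :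
    HasGradientAt (fun v : F => φ ((WithLp.equiv 2 (E × F)).symm (w.fst, v))) s.snd w.snd := by
  have h1 : HasFDerivAt φ (InnerProductSpace.toDual ℝ _ s) w := hφ.hasFDerivAt
  have hι : HasFDerivAt (fun v : F => (WithLp.equiv 2 (E × F)).symm (w.fst, v))
      ((((WithLp.prodContinuousLinearEquiv 2 ℝ E F).symm :
          (E × F) →L[ℝ] WithLp 2 (E × F))).comp (ContinuousLinearMap.inr ℝ E F)) w.snd :=
    ((WithLp.prodContinuousLinearEquiv 2 ℝ E F).symm.hasFDerivAt).comp _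
      (hasFDerivAt_prodMk_right w.fst w.snd)
  have h2 := h1.comp w.snd hι
  have h3 : (InnerProductSpace.toDual ℝ (WithLp 2 (E × F)) s).comp
      ((((WithLp.prodContinuousLinearEquiv 2 ℝ E F).symm :
          (E × F) →L[ℝ] WithLp 2 (E × F))).comp (ContinuousLinearMap.inr ℝ E F))
      = InnerProductSpace.toDual ℝ F s.snd := by
    ext v
    simp only [ContinuousLinearMap.comp_apply, ContinuousLinearMap.inr_apply,
      InnerProductSpace.toDual_apply_apply, ContinuousLinearEquiv.coe_coe,
      WithLp.prodContinuousLinearEquiv_symm_apply]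
    rw [WithLp.prod_inner_apply]
    simp
  rw [h3] at h2
  simpa [Function.comp_def] using h2.hasGradientAt

/-- Gradient of `x ↦ ‖G x‖ ^ 2` is `2 • (DG)† (G x)`. -/
theorem hasGradientAt_norm_sq_comp {X Y : Type*}
    [NormedAddCommGroup X] [InnerProductSpace ℝ X] [CompleteSpace X]
    [NormedAddCommGroup Y] [InnerProductSpace ℝ Y] [CompleteSpace Y]
    {G : X → Y} {A : X →L[ℝ] Y} {x : X} (hG : HasFDerivAt G A x) :
    HasGradientAt (fun x => ‖G x‖ ^ 2)
      ((2 : ℝ) • (ContinuousLinearMap.adjoint A) (G x)) x := by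
  have h1 : HasFDerivAt (fun t => (inner ℝ (G t) (G t) : ℝ))
      ((fderivInnerCLM ℝ (G x, G x)).comp (A.prod A)) x := hG.inner ℝ hG
  have h2 : (fderivInnerCLM ℝ (G x, G x)).comp (A.prod A)
      = InnerProductSpace.toDual ℝ X ((2 : ℝ) • (ContinuousLinearMap.adjoint A) (G x)) := by
    ext d
    simp only [ContinuousLinearMap.comp_apply, ContinuousLinearMap.prod_apply,
      fderivInnerCLM_apply, InnerProductSpace.toDual_apply_apply, inner_smul_left,
      RCLike.conj_to_real, ContinuousLinearMap.adjoint_inner_left]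
    rw [real_inner_comm (A d) (G x)]
    ring
  rw [h2] at h1
  have h3 : (fun t => (inner ℝ (G t) (G t) : ℝ)) = fun t => ‖G t‖ ^ 2 := by
    funext t; rw [← real_inner_self_eq_norm_sq]
  rw [h3] at h1
  simpa using h1.hasGradientAt

set_option synthInstance.maxHeartbeats 1000000 in
/-- An injective continuous linear map between finite-dimensional spaces is bounded below. -/
theorem exists_norm_le_of_injective {Y X : Type*} [NormedAddCommGroup Y] [NormedSpace ℝ Y]
    [NormedAddCommGroup X] [NormedSpace ℝ X] [FiniteDimensional ℝ X] [FiniteDimensional ℝ Y]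
    (T : Y →L[ℝ] X) (hT : Function.Injective T) :
    ∃ C : ℝ, 0 ≤ C ∧ ∀ y, ‖y‖ ≤ C * ‖T y‖ := by
  have hT' : Function.Injective (T : Y →ₗ[ℝ] X) := hT
  let e := LinearEquiv.ofInjective (T : Y →ₗ[ℝ] X) hT'
  let S := LinearMap.toContinuousLinearMap (e.symm.toLinearMap)
  refine ⟨‖S‖, S.opNorm_nonneg, fun y => ?_⟩
  have h1 : S (e y) = y := by
    simp [S, e]
  calc ‖y‖ = ‖S (e y)‖ := by rw [h1]
    _ ≤ ‖S‖ * ‖e y‖ := S.le_opNorm _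
    _ = ‖S‖ * ‖T y‖ := rfl

end Aux

/-- Abbreviation for the ℓ²-product of two Euclidean spaces. -/
abbrev XX (n m : ℕ) := WithLp 2 (EuclideanSpace ℝ (Fin n) × EuclideanSpace ℝ (Fin m))


set_option maxHeartbeats 2000000 in
set_option synthInstance.maxHeartbeats 400000 in
/-- **Theorem 2: the penalty method converges to KKT points of the single-level
reformulation of the bilevel problem.**
Let `f : ℝⁿ × ℝᵐ → ℝ` and `h : ℝⁿ × ℝᵐ → ℝᵖ` be `C¹`, `g : ℝⁿ × ℝᵐ → ℝ` be `C²`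
(all in curried form), and `g̃(u,v) := (h(u,v), ∇_v g(u,v))` the combined constraint map.
Suppose `ε_k > 0` with `ε_k → 0`, `γ_k > 0` non-decreasing with `γ_k → ∞`, and
`(u_k, v_k)` satisfies the tolerance condition
`‖∇_u f̃(u_k,v_k;γ_k)‖² + ‖∇_v f̃(u_k,v_k;γ_k)‖² ≤ ε_k²` for the penalty function
`f̃(u,v;γ) = f(u,v) + (γ/2)(‖h(u,v)‖² + ‖∇_v g(u,v)‖²)`. If `(ū,v̄)` is the limit of a
subsequence of `(u_k,v_k)` and `D g̃(ū,v̄)` is surjective (LICQ), then `(ū,v̄)` satisfies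
the KKT conditions of `min f(u,v) s.t. h(u,v) = 0, ∇_v g(u,v) = 0`: namely
`h(ū,v̄) = 0`, `∇_v g(ū,v̄) = 0`, and `∇f(ū,v̄) = (D g̃(ū,v̄))* μ` for some multiplier
`μ ∈ ℝᵖ × ℝᵐ`. -/
theorem penalty_bilevel_limit_point_satisfies_KKT
    {n m p : ℕ}
    (f g : EuclideanSpace ℝ (Fin n) → EuclideanSpace ℝ (Fin m) → ℝ)
    (h : EuclideanSpace ℝ (Fin n) → EuclideanSpace ℝ (Fin m) → EuclideanSpace ℝ (Fin p))
    (hf : ContDiff ℝ 1 (fun q : EuclideanSpace ℝ (Fin n) × EuclideanSpace ℝ (Fin m) =>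
      f q.1 q.2))
    (hh : ContDiff ℝ 1 (fun q : EuclideanSpace ℝ (Fin n) × EuclideanSpace ℝ (Fin m) =>
      h q.1 q.2))
    (hg : ContDiff ℝ 2 (fun q : EuclideanSpace ℝ (Fin n) × EuclideanSpace ℝ (Fin m) =>
      g q.1 q.2))
    (ε : ℕ → ℝ) (hεpos : ∀ k, 0 < ε k) (hεlim : Tendsto ε atTop (𝓝 0))
    (γ : ℕ → ℝ) (hγpos : ∀ k, 0 < γ k) (hγmono : Monotone γ)
    (hγlim : Tendsto γ atTop atTop)
    (u : ℕ → EuclideanSpace ℝ (Fin n)) (v : ℕ → EuclideanSpace ℝ (Fin m))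
    (htol : ∀ k,
      ‖gradient (fun u' => f u' (v k) +
          (γ k / 2) * (‖h u' (v k)‖ ^ 2 + ‖gradient (g u') (v k)‖ ^ 2)) (u k)‖ ^ 2 +
        ‖gradient (fun v' => f (u k) v' +
          (γ k / 2) * (‖h (u k) v'‖ ^ 2 + ‖gradient (g (u k)) v'‖ ^ 2)) (v k)‖ ^ 2
        ≤ (ε k) ^ 2)
    (ubar : EuclideanSpace ℝ (Fin n)) (vbar : EuclideanSpace ℝ (Fin m))
    (φ : ℕ → ℕ) (hφ : StrictMono φ)
    (hlim : Tendsto (fun j => (u (φ j), v (φ j))) atTop (𝓝 (ubar, vbar)))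
    (hLICQ : Function.Surjective
      (fderiv ℝ (combinedConstraint h g) ((WithLp.equiv 2 _).symm (ubar, vbar)))) :
    h ubar vbar = 0 ∧ gradient (g ubar) vbar = 0 ∧
      ∃ μ : WithLp 2 (EuclideanSpace ℝ (Fin p) × EuclideanSpace ℝ (Fin m)),
        gradient
            (fun w : WithLp 2 (EuclideanSpace ℝ (Fin n) × EuclideanSpace ℝ (Fin m)) =>
              f ((WithLp.equiv 2 _) w).1 ((WithLp.equiv 2 _) w).2)
            ((WithLp.equiv 2 _).symm (ubar, vbar)) =
          (ContinuousLinearMap.adjoint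
            (fderiv ℝ (combinedConstraint h g) ((WithLp.equiv 2 _).symm (ubar, vbar)))) μ := by
  classical
  set G : XX n m → XX p m := combinedConstraint h g with hGdef
  -- the uncurried versions
  set F1 : XX n m → ℝ := fun w => f w.fst w.snd with hF1def
  have hF1 : ContDiff ℝ 1 F1 :=
    hf.comp WithLp.contDiff_ofLp
  -- representation of the partial gradient of g
  have hgradg : ∀ w : XX n m, gradient (g w.fst) w.snd =
      (InnerProductSpace.toDual ℝ (EuclideanSpace ℝ (Fin m))).symm
        ((fderiv ℝ (fun q : EuclideanSpace ℝ (Fin n) × EuclideanSpace ℝ (Fin m) => g q.1 q.2)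
            (w.fst, w.snd)).comp (ContinuousLinearMap.inr ℝ _ _)) := by
    intro w
    have hd : HasFDerivAt (g w.fst)
        ((fderiv ℝ (fun q : EuclideanSpace ℝ (Fin n) × EuclideanSpace ℝ (Fin m) => g q.1 q.2)
            (w.fst, w.snd)).comp (ContinuousLinearMap.inr ℝ _ _)) w.snd :=
      (((hg.differentiable (by norm_num)) (w.fst, w.snd)).hasFDerivAt).comp _
        (hasFDerivAt_prodMk_right w.fst w.snd)
    rw [show gradient (g w.fst) w.snd
        = (InnerProductSpace.toDual ℝ _).symm (fderiv ℝ (g w.fst) w.snd) from rfl, hd.fderiv]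
  -- G is C¹
  have hH : ContDiff ℝ 1 (fun w : XX n m => h w.fst w.snd) :=
    hh.comp WithLp.contDiff_ofLp
  have hfd : ContDiff ℝ 1
      (fderiv ℝ (fun q : EuclideanSpace ℝ (Fin n) × EuclideanSpace ℝ (Fin m) => g q.1 q.2)) :=
    hg.fderiv_right (by norm_num)
  have hK : ContDiff ℝ 1 (fun w : XX n m => gradient (g w.fst) w.snd) := by
    have step1 : ContDiff ℝ 1 (fun w : XX n m =>
        fderiv ℝ (fun q : EuclideanSpace ℝ (Fin n) × EuclideanSpace ℝ (Fin m) => g q.1 q.2)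
          (w.fst, w.snd)) :=
      hfd.comp WithLp.contDiff_ofLp
    have step2 : ContDiff ℝ 1 (fun w : XX n m =>
        (fderiv ℝ (fun q : EuclideanSpace ℝ (Fin n) × EuclideanSpace ℝ (Fin m) => g q.1 q.2)
          (w.fst, w.snd)).comp (ContinuousLinearMap.inr ℝ _ _)) :=
      step1.clm_comp contDiff_const
    have step3 : ContDiff ℝ 1 (fun w : XX n m =>
        (toDualSymmL (EuclideanSpace ℝ (Fin m)))
          ((fderiv ℝ (fun q : EuclideanSpace ℝ (Fin n) × EuclideanSpace ℝ (Fin m) => g q.1 q.2)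
            (w.fst, w.snd)).comp (ContinuousLinearMap.inr ℝ _ _))) :=
      (toDualSymmL _).contDiff.comp step2
    have h2 : (fun w : XX n m => gradient (g w.fst) w.snd) = fun w : XX n m =>
        (toDualSymmL (EuclideanSpace ℝ (Fin m)))
          ((fderiv ℝ (fun q : EuclideanSpace ℝ (Fin n) × EuclideanSpace ℝ (Fin m) => g q.1 q.2)
            (w.fst, w.snd)).comp (ContinuousLinearMap.inr ℝ _ _)) := by
      funext w
      rw [hgradg w]
      rfl
    rw [h2]
    exact step3
  have hGC1 : ContDiff ℝ 1 G :=
    ((WithLp.prodContinuousLinearEquiv 2 ℝ (EuclideanSpace ℝ (Fin p))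
        (EuclideanSpace ℝ (Fin m))).symm.contDiff).comp (hH.prodMk hK)
  have hGdiff : Differentiable ℝ G := hGC1.differentiable one_ne_zero
  have hF1diff : Differentiable ℝ F1 := hF1.differentiable one_ne_zero
  -- the gradient of the penalty function
  have hPen : ∀ (c : ℝ) (x : XX n m),
      HasGradientAt (fun w : XX n m =>
          f w.fst w.snd + c / 2 * (‖h w.fst w.snd‖ ^ 2 + ‖gradient (g w.fst) w.snd‖ ^ 2))
        (gradient F1 x + c • (ContinuousLinearMap.adjoint (fderiv ℝ G x)) (G x)) x := by
    intro c x
    have hGx : HasFDerivAt G (fderiv ℝ G x) x := (hGdiff x).hasFDerivAt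
    have hsq := hasGradientAt_norm_sq_comp hGx
    have hF1x : HasGradientAt F1 (gradient F1 x) x := (hF1diff x).hasGradientAt
    have hfun : (fun w : XX n m =>
        f w.fst w.snd + c / 2 * (‖h w.fst w.snd‖ ^ 2 + ‖gradient (g w.fst) w.snd‖ ^ 2))
        = fun w => F1 w + (c/2) • ‖G w‖ ^ 2 := by
      funext w
      have hnorm : ‖G w‖ ^ 2 = ‖h w.fst w.snd‖ ^ 2 + ‖gradient (g w.fst) w.snd‖ ^ 2 := by
        rw [WithLp.prod_norm_sq_eq_of_L2]
        rfl
      rw [hnorm, smul_eq_mul, hF1def]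
    rw [hfun]
    rw [hasGradientAt_iff_hasFDerivAt] at hF1x hsq ⊢
    have hv : InnerProductSpace.toDual ℝ (XX n m)
        (gradient F1 x + c • (ContinuousLinearMap.adjoint (fderiv ℝ G x)) (G x))
        = InnerProductSpace.toDual ℝ (XX n m) (gradient F1 x)
          + (c/2) • InnerProductSpace.toDual ℝ (XX n m)
              ((2:ℝ) • (ContinuousLinearMap.adjoint (fderiv ℝ G x)) (G x)) := by
      ext d
      simp only [ContinuousLinearMap.add_apply, ContinuousLinearMap.coe_smul',
        Pi.smul_apply, InnerProductSpace.toDual_apply_apply, inner_add_left, inner_smul_left,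
        RCLike.conj_to_real, smul_eq_mul]
      ring
    rw [hv]
    exact hF1x.add (hsq.const_smul (c/2))
  -- the sequence and the tolerance bound
  set xk : ℕ → XX n m := fun k => (WithLp.equiv 2 _).symm (u k, v k) with hxkdef
  set sk : ℕ → XX n m := fun k =>
    gradient F1 (xk k) + γ k • (ContinuousLinearMap.adjoint (fderiv ℝ G (xk k))) (G (xk k))
    with hskdef
  have hskle : ∀ k, ‖sk k‖ ≤ ε k := by
    intro k
    have h1 := (hPen (γ k) (xk k)).withLp_fst
    have h2 := (hPen (γ k) (xk k)).withLp_snd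
    have e1 : gradient (fun u' => f u' (v k) +
        (γ k / 2) * (‖h u' (v k)‖ ^ 2 + ‖gradient (g u') (v k)‖ ^ 2)) (u k) = (sk k).fst :=
      h1.gradient
    have e2 : gradient (fun v' => f (u k) v' +
        (γ k / 2) * (‖h (u k) v'‖ ^ 2 + ‖gradient (g (u k)) v'‖ ^ 2)) (v k) = (sk k).snd :=
      h2.gradient
    have h3 := htol k
    rw [e1, e2] at h3
    have h4 : ‖sk k‖ ^ 2 ≤ (ε k) ^ 2 := by
      rw [WithLp.prod_norm_sq_eq_of_L2]; exact h3
    exact (pow_le_pow_iff_left₀ (norm_nonneg _) (hεpos k).le two_ne_zero).mp h4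
  -- limits along the subsequence
  set xbar : XX n m := (WithLp.equiv 2 _).symm (ubar, vbar) with hxbardef
  have hxlim : Tendsto (fun j => xk (φ j)) atTop (𝓝 xbar) :=
    ((WithLp.prodContinuousLinearEquiv 2 ℝ _ _).symm.continuous.tendsto (ubar, vbar)).comp hlim
  set A := fderiv ℝ G xbar with hAdef
  have hcontgradF1 : Continuous (fun w : XX n m => gradient F1 w) :=
    ((InnerProductSpace.toDual ℝ (XX n m)).symm.continuous).comp (hF1.continuous_fderiv one_ne_zero)
  have hcontΨ : Continuous (fun w : XX n m =>
      (ContinuousLinearMap.adjoint (fderiv ℝ G w)) (G w)) :=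
    Continuous.clm_apply
      ((LinearIsometryEquiv.continuous ContinuousLinearMap.adjoint).comp
        (hGC1.continuous_fderiv one_ne_zero))
      hGC1.continuous
  have hφat : Tendsto φ atTop atTop := hφ.tendsto_atTop
  have hs0 : Tendsto (fun j => sk (φ j)) atTop (𝓝 0) :=
    squeeze_zero_norm (fun j => hskle (φ j)) (hεlim.comp hφat)
  have hgradlim : Tendsto (fun j => gradient F1 (xk (φ j))) atTop (𝓝 (gradient F1 xbar)) :=
    (hcontgradF1.tendsto xbar).comp hxlim
  set tj : ℕ → XX n m := fun j =>
    γ (φ j) • (ContinuousLinearMap.adjoint (fderiv ℝ G (xk (φ j)))) (G (xk (φ j))) with htjdef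
  have htlim : Tendsto tj atTop (𝓝 (-(gradient F1 xbar))) := by
    have h1 : tj = fun j => sk (φ j) - gradient F1 (xk (φ j)) := by
      funext j
      rw [htjdef, hskdef]
      simp
    rw [h1]
    simpa using hs0.sub hgradlim
  have hγφ : Tendsto (fun j => γ (φ j)) atTop atTop := hγlim.comp hφat
  have hΨ0 : Tendsto (fun j =>
      (ContinuousLinearMap.adjoint (fderiv ℝ G (xk (φ j)))) (G (xk (φ j)))) atTop (𝓝 0) := by
    have h1 : (fun j =>
        (ContinuousLinearMap.adjoint (fderiv ℝ G (xk (φ j)))) (G (xk (φ j))))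
        = fun j => (γ (φ j))⁻¹ • tj j := by
      funext j
      rw [htjdef, inv_smul_smul₀ (hγpos (φ j)).ne']
    rw [h1]
    have h2 := (tendsto_inv_atTop_zero.comp hγφ).smul htlim
    simpa using h2
  have hΨbar : (ContinuousLinearMap.adjoint A) (G xbar) = 0 :=
    tendsto_nhds_unique ((hcontΨ.tendsto xbar).comp hxlim) hΨ0
  -- adjoint of A is injective
  have hAdjInj : Function.Injective ⇑(ContinuousLinearMap.adjoint A) := by
    intro y1 y2 hy
    have h0 : (ContinuousLinearMap.adjoint A) (y1 - y2) = 0 := by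
      rw [map_sub, hy, sub_self]
    obtain ⟨z, hz⟩ := hLICQ (y1 - y2)
    have h1 : (inner ℝ (y1 - y2) (y1 - y2) : ℝ) = 0 := by
      calc (inner ℝ (y1 - y2) (y1 - y2) : ℝ) = inner ℝ (y1 - y2) (A z) := by rw [hz]
        _ = inner ℝ ((ContinuousLinearMap.adjoint A) (y1 - y2)) z :=
            (ContinuousLinearMap.adjoint_inner_left A z (y1 - y2)).symm
        _ = 0 := by rw [h0, inner_zero_left]
    exact sub_eq_zero.mp (inner_self_eq_zero.mp h1)
  have hGxbar : G xbar = 0 := hAdjInj (by rw [hΨbar, map_zero])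
  -- feasibility
  have hpair : h ubar vbar = 0 ∧ gradient (g ubar) vbar = 0 := by
    have h2 : (WithLp.equiv 2 (EuclideanSpace ℝ (Fin p) × EuclideanSpace ℝ (Fin m)))
        ((WithLp.equiv 2 (EuclideanSpace ℝ (Fin p) × EuclideanSpace ℝ (Fin m))).symm
          (h ubar vbar, gradient (g ubar) vbar))
        = (WithLp.equiv 2 (EuclideanSpace ℝ (Fin p) × EuclideanSpace ℝ (Fin m)))
            (0 : XX p m) := congrArg _ hGxbar
    have h1 : ((h ubar vbar, gradient (g ubar) vbar) :
        EuclideanSpace ℝ (Fin p) × EuclideanSpace ℝ (Fin m)) = 0 := by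
      simpa using h2
    exact ⟨congrArg Prod.fst h1, congrArg Prod.snd h1⟩
  refine ⟨hpair.1, hpair.2, ?_⟩
  -- multiplier
  set Aj : ℕ → (XX n m →L[ℝ] XX p m) := fun j => fderiv ℝ G (xk (φ j)) with hAjdef
  set μj : ℕ → XX p m := fun j => γ (φ j) • G (xk (φ j)) with hμjdef
  have hAjμ : ∀ j, (ContinuousLinearMap.adjoint (Aj j)) (μj j) = tj j := by
    intro j
    exact map_smul (ContinuousLinearMap.adjoint (Aj j)) (γ (φ j)) (G (xk (φ j)))
  obtain ⟨C, hC0, hC⟩ := exists_norm_le_of_injective (ContinuousLinearMap.adjoint A) hAdjInj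
  have hAconv : Tendsto Aj atTop (𝓝 A) :=
    ((hGC1.continuous_fderiv one_ne_zero).tendsto xbar).comp hxlim
  set δ : ℕ → ℝ := fun j =>
    ‖ContinuousLinearMap.adjoint (Aj j) - ContinuousLinearMap.adjoint A‖ with hδdef
  have hδ0 : Tendsto δ atTop (𝓝 0) := by
    have h1 : δ = fun j => ‖Aj j - A‖ := by
      funext j
      show ‖ContinuousLinearMap.adjoint (Aj j) - ContinuousLinearMap.adjoint A‖ = ‖Aj j - A‖
      rw [← map_sub]
      exact LinearIsometryEquiv.norm_map _ _
    rw [h1]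
    exact tendsto_iff_norm_sub_tendsto_zero.mp hAconv
  have hδnn : ∀ j, 0 ≤ δ j := fun j => norm_nonneg _
  have h1ev : ∀ᶠ j in atTop, δ j < 1/(2*(C+1)) :=
    hδ0.eventually (gt_mem_nhds (by positivity))
  have h2ev : ∀ᶠ j in atTop, ‖tj j‖ < ‖gradient F1 xbar‖ + 1 :=
    (htlim.norm).eventually (gt_mem_nhds (by rw [norm_neg]; linarith))
  have hμbound : ∀ᶠ j in atTop, ‖μj j‖ ≤ 2*C*(‖gradient F1 xbar‖+1) := by
    filter_upwards [h1ev, h2ev] with j hj1 hj2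
    have h3 : ‖μj j‖ ≤ C * ‖(ContinuousLinearMap.adjoint A) (μj j)‖ := hC _
    have h4 : ‖(ContinuousLinearMap.adjoint A) (μj j)‖ ≤ ‖tj j‖ + δ j * ‖μj j‖ := by
      have e : (ContinuousLinearMap.adjoint A) (μj j)
          = tj j - (ContinuousLinearMap.adjoint (Aj j) - ContinuousLinearMap.adjoint A) (μj j) := by
        rw [← hAjμ j]
        simp [ContinuousLinearMap.sub_apply]
      rw [e]
      refine (norm_sub_le _ _).trans ?_
      gcongr
      exact ContinuousLinearMap.le_opNorm _ _
    have h5 : C * δ j ≤ 1/2 := by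
      have h6 : C * δ j ≤ C * (1/(2*(C+1))) := mul_le_mul_of_nonneg_left hj1.le hC0
      have h7 : C * (1/(2*(C+1))) ≤ 1/2 := by
        rw [mul_one_div, div_le_div_iff₀ (by positivity) (by norm_num)]
        linarith
      linarith
    nlinarith [mul_le_mul_of_nonneg_left h4 hC0,
      mul_le_mul_of_nonneg_right h5 (norm_nonneg (μj j)),
      mul_le_mul_of_nonneg_left hj2.le hC0, norm_nonneg (μj j)]
  have hadjμconv : Tendsto (fun j => (ContinuousLinearMap.adjoint A) (μj j)) atTop
      (𝓝 (-(gradient F1 xbar))) := by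
    have hdiff : Tendsto (fun j =>
        (ContinuousLinearMap.adjoint A) (μj j) - tj j) atTop (𝓝 0) := by
      refine squeeze_zero_norm' (a := fun j => δ j * (2*C*(‖gradient F1 xbar‖+1))) ?_ ?_
      · filter_upwards [hμbound] with j hj
        have e : (ContinuousLinearMap.adjoint A) (μj j) - tj j
            = -((ContinuousLinearMap.adjoint (Aj j) - ContinuousLinearMap.adjoint A) (μj j)) := by
          rw [← hAjμ j]
          simp [ContinuousLinearMap.sub_apply]
        rw [e, norm_neg]
        calc ‖(ContinuousLinearMap.adjoint (Aj j) - ContinuousLinearMap.adjoint A) (μj j)‖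
            ≤ δ j * ‖μj j‖ := ContinuousLinearMap.le_opNorm _ _
          _ ≤ δ j * (2*C*(‖gradient F1 xbar‖+1)) := mul_le_mul_of_nonneg_left hj (hδnn j)
      · simpa using hδ0.mul_const (2*C*(‖gradient F1 xbar‖+1))
    have h1 := hdiff.add htlim
    simpa using h1
  have hmem : -(gradient F1 xbar) ∈
      ((LinearMap.range ((ContinuousLinearMap.adjoint A : XX p m →L[ℝ] XX n m) :
        XX p m →ₗ[ℝ] XX n m) : Submodule ℝ (XX n m)) : Set (XX n m)) := by
    have hclosed : IsClosed
        ((LinearMap.range ((ContinuousLinearMap.adjoint A : XX p m →L[ℝ] XX n m) :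
          XX p m →ₗ[ℝ] XX n m) : Submodule ℝ (XX n m)) : Set (XX n m)) :=
      Submodule.closed_of_finiteDimensional _
    rw [← hclosed.closure_eq]
    refine mem_closure_of_tendsto hadjμconv (Eventually.of_forall (fun j => ?_))
    exact LinearMap.mem_range_self _ (μj j)
  obtain ⟨μ', hμ'⟩ := hmem
  refine ⟨-μ', ?_⟩
  show gradient F1 xbar = (ContinuousLinearMap.adjoint A) (-μ')
  have hμ'' : (ContinuousLinearMap.adjoint A) μ' = -(gradient F1 xbar) := hμ'
  rw [map_neg, hμ'', neg_neg]


end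
end

section
/- Let F : ℝᴺ → ℝ and c : ℝᴺ → ℝᴹ be continuously differentiable. Suppose {ε_k} is a sequence of positive reals with ε_k → 0, {γ_k} is a sequence of positive reals with γ_k → ∞, and {w_k} is a sequence in ℝᴺ satisfying ‖∇F(w_k) + γ_k (Dc(w_k))* c(w_k)‖ ≤ ε_k for all k. If w̄ is the limit of some subsequence of {w_k} and Dc(w̄) : ℝᴺ → ℝᴹ is surjective, then c(w̄) = 0 and there exists μ ∈ ℝᴹ such that ∇F(w̄) = (Dc(w̄))* μ; that is, w̄ satisfies the KKT conditions of the problem min F(w) subject to c(w) = 0. -/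
open scoped Topology
open Filter

set_option maxHeartbeats 2000000 in
/-- **Penalty method convergence to KKT points (single-level reformulation).**
If `F : ℝᴺ → ℝ` and `c : ℝᴺ → ℝᴹ` are continuously differentiable, `ε_k > 0` with
`ε_k → 0`, `γ_k > 0` with `γ_k → ∞`, and `w_k` satisfies the approximate stationarity
(tolerance) condition `‖∇F(w_k) + γ_k (Dc(w_k))* c(w_k)‖ ≤ ε_k` for all `k`, then any
limit point `w̄` of `{w_k}` at which `Dc(w̄)` is surjective (LICQ) satisfies the KKT
conditions of `min F(w) s.t. c(w) = 0`: primal feasibility `c(w̄) = 0` and stationarity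
`∇F(w̄) = (Dc(w̄))* μ` for some multiplier `μ`. -/
theorem penalty_limit_point_satisfies_KKT
    {N M : ℕ}
    (F : EuclideanSpace ℝ (Fin N) → ℝ) (c : EuclideanSpace ℝ (Fin N) → EuclideanSpace ℝ (Fin M))
    (hF : ContDiff ℝ 1 F) (hc : ContDiff ℝ 1 c)
    (ε : ℕ → ℝ) (hεpos : ∀ k, 0 < ε k) (hεlim : Tendsto ε atTop (𝓝 0))
    (γ : ℕ → ℝ) (hγpos : ∀ k, 0 < γ k) (hγlim : Tendsto γ atTop atTop)
    (w : ℕ → EuclideanSpace ℝ (Fin N))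
    (htol : ∀ k,
      ‖gradient F (w k) + γ k • (ContinuousLinearMap.adjoint (fderiv ℝ c (w k))) (c (w k))‖
        ≤ ε k)
    (wbar : EuclideanSpace ℝ (Fin N))
    (φ : ℕ → ℕ) (hφ : StrictMono φ)
    (hlim : Tendsto (fun j => w (φ j)) atTop (𝓝 wbar))
    (hLICQ : Function.Surjective (fderiv ℝ c wbar)) :
    c wbar = 0 ∧
      ∃ μ : EuclideanSpace ℝ (Fin M),
        gradient F wbar = (ContinuousLinearMap.adjoint (fderiv ℝ c wbar)) μ := by
  have hinner : ∀ (T : EuclideanSpace ℝ (Fin N) →L[ℝ] EuclideanSpace ℝ (Fin M))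
      (x : EuclideanSpace ℝ (Fin N)) (y : EuclideanSpace ℝ (Fin M)),
      inner ℝ (ContinuousLinearMap.adjoint T y) x = (inner ℝ y (T x) : ℝ) :=
    fun T x y => ContinuousLinearMap.adjoint_inner_left T x y
  set B : EuclideanSpace ℝ (Fin N) →L[ℝ] EuclideanSpace ℝ (Fin M) := fderiv ℝ c wbar with hB
  set Abar : EuclideanSpace ℝ (Fin M) →L[ℝ] EuclideanSpace ℝ (Fin N) :=
    ContinuousLinearMap.adjoint B with hAbar
  set A : ℕ → (EuclideanSpace ℝ (Fin M) →L[ℝ] EuclideanSpace ℝ (Fin N)) :=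
    fun j => ContinuousLinearMap.adjoint (fderiv ℝ c (w (φ j))) with hA
  -- continuity facts
  have hfderiv_cont : Continuous (fun x => fderiv ℝ c x) := hc.continuous_fderiv one_ne_zero
  have hAcont : Tendsto (fun j => A j) atTop (𝓝 Abar) := by
    have : Continuous (fun x : EuclideanSpace ℝ (Fin N) =>
        ContinuousLinearMap.adjoint (fderiv ℝ c x)) :=
      (ContinuousLinearMap.adjoint (𝕜 := ℝ) (E := EuclideanSpace ℝ (Fin N))
        (F := EuclideanSpace ℝ (Fin M))).continuous.comp hfderiv_cont
    exact (this.tendsto wbar).comp hlim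
  have hgrad_cont : Continuous (fun x => gradient F x) := by
    have h1 : Continuous (fun x => fderiv ℝ F x) := hF.continuous_fderiv one_ne_zero
    exact (InnerProductSpace.toDual ℝ (EuclideanSpace ℝ (Fin N))).symm.continuous.comp h1
  have hg : Tendsto (fun j => gradient F (w (φ j))) atTop (𝓝 (gradient F wbar)) :=
    (hgrad_cont.tendsto wbar).comp hlim
  have hcj : Tendsto (fun j => c (w (φ j))) atTop (𝓝 (c wbar)) :=
    (hc.continuous.tendsto wbar).comp hlim
  -- the residual tends to zero
  have hεφ : Tendsto (fun j => ε (φ j)) atTop (𝓝 0) :=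
    hεlim.comp hφ.tendsto_atTop
  have hres : Tendsto (fun j =>
      gradient F (w (φ j)) + γ (φ j) • (A j) (c (w (φ j)))) atTop (𝓝 0) := by
    apply squeeze_zero_norm (fun j => htol (φ j)) hεφ
  -- so the penalty gradient term converges to -∇F(w̄)
  have hT : Tendsto (fun j => γ (φ j) • (A j) (c (w (φ j)))) atTop
      (𝓝 (-(gradient F wbar))) := by
    have := hres.sub hg
    simp only [add_sub_cancel_left] at this
    simpa using this
  -- γ∘φ → ∞, so (γ∘φ)⁻¹ → 0
  have hγφ : Tendsto (fun j => γ (φ j)) atTop atTop := hγlim.comp hφ.tendsto_atTop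
  have hγinv : Tendsto (fun j => (γ (φ j))⁻¹) atTop (𝓝 0) :=
    tendsto_inv_atTop_zero.comp hγφ
  -- hence A j (c (w (φ j))) → 0
  have hAc0 : Tendsto (fun j => (A j) (c (w (φ j)))) atTop (𝓝 0) := by
    have := hγinv.smul hT
    simp only [zero_smul] at this
    have heq : (fun j => (γ (φ j))⁻¹ • (γ (φ j) • (A j) (c (w (φ j)))))
        = fun j => (A j) (c (w (φ j))) := by
      funext j
      rw [smul_smul, inv_mul_cancel₀ (hγpos (φ j)).ne', one_smul]
    rwa [heq] at this
  -- and A j (c (w (φ j))) → Abar (c w̄) by continuity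
  have hAcbar : Tendsto (fun j => (A j) (c (w (φ j)))) atTop (𝓝 (Abar (c wbar))) :=
    (isBoundedBilinearMap_apply.continuous.tendsto (Abar, c wbar)).comp
      (hAcont.prodMk_nhds hcj)
  have hAbarc : Abar (c wbar) = 0 := tendsto_nhds_unique hAcbar hAc0
  -- injectivity of the adjoint: c w̄ = 0
  have hAbar_inj : Function.Injective Abar := by
    intro x y hxy
    have h0 : Abar (x - y) = 0 := by rw [map_sub, hxy, sub_self]
    obtain ⟨u, hu⟩ := hLICQ (x - y)
    have : (inner ℝ (x - y) (x - y) : ℝ) = 0 := by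
      calc (inner ℝ (x - y) (x - y) : ℝ) = inner ℝ (x - y) (B u) := by rw [hu]
        _ = inner ℝ (Abar (x - y)) u := (hinner B u (x - y)).symm
        _ = 0 := by rw [h0]; exact inner_zero_left u
    have := inner_self_eq_zero.mp this
    exact sub_eq_zero.mp this
  have hfeas : c wbar = 0 := by
    have : Abar (c wbar) = Abar 0 := by rw [hAbarc, map_zero]
    exact hAbar_inj this
  refine ⟨hfeas, ?_⟩
  -- antilipschitz bound for Abar
  obtain ⟨K, hKpos, hKanti⟩ :=
    (Abar : EuclideanSpace ℝ (Fin M) →ₗ[ℝ] EuclideanSpace ℝ (Fin N)).exists_antilipschitzWith (LinearMap.ker_eq_bot.mpr hAbar_inj)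
  have hKbound : ∀ y : EuclideanSpace ℝ (Fin M), ‖y‖ ≤ (K : ℝ) * ‖Abar y‖ := fun y =>
    ContinuousLinearMap.bound_of_antilipschitz Abar hKanti y
  -- the scaled constraint values
  set u : ℕ → EuclideanSpace ℝ (Fin M) := fun j => γ (φ j) • c (w (φ j)) with hu
  have hAu : Tendsto (fun j => (A j) (u j)) atTop (𝓝 (-(gradient F wbar))) := by
    have heq : (fun j => (A j) (u j)) = fun j => γ (φ j) • (A j) (c (w (φ j))) := by
      funext j; simp [hu, map_smul]
    rw [heq]; exact hT
  -- u is eventually bounded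
  have hAu_bdd : ∃ C : ℝ, ∀ᶠ j in atTop, ‖(A j) (u j)‖ ≤ C := by
    refine ⟨‖gradient F wbar‖ + 1, ?_⟩
    have := hAu.norm.eventually_le_const (lt_add_one ‖-(gradient F wbar)‖)
    simpa using this
  obtain ⟨C, hC⟩ := hAu_bdd
  have hAclose : ∀ᶠ j in atTop, ‖A j - Abar‖ ≤ (2 * K)⁻¹ := by
    have h2K : (0 : ℝ) < (2 * K)⁻¹ := by positivity
    have : Tendsto (fun j => ‖A j - Abar‖) atTop (𝓝 0) := by
      simpa using (tendsto_sub_nhds_zero_iff.mpr hAcont).norm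
    exact this.eventually_le_const h2K
  -- bound ‖u j‖ eventually
  have hu_bdd : ∀ᶠ j in atTop, ‖u j‖ ≤ 2 * K * C := by
    filter_upwards [hC, hAclose] with j hjC hjA
    have hub : ‖u j‖ ≤ K * ‖Abar (u j)‖ := hKbound (u j)
    have h1 : ‖Abar (u j)‖ ≤ ‖(A j) (u j)‖ + ‖(Abar - A j) (u j)‖ := by
      have : Abar (u j) = (A j) (u j) + (Abar - A j) (u j) := by
        simp [ContinuousLinearMap.sub_apply]
      rw [this]; exact norm_add_le _ _
    have h2 : ‖(Abar - A j) (u j)‖ ≤ (2 * K)⁻¹ * ‖u j‖ := by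
      calc ‖(Abar - A j) (u j)‖ ≤ ‖Abar - A j‖ * ‖u j‖ :=
            ContinuousLinearMap.le_opNorm _ _
        _ ≤ (2 * K)⁻¹ * ‖u j‖ := by
            apply mul_le_mul_of_nonneg_right _ (norm_nonneg _)
            rwa [norm_sub_rev]
    have hK0 : (0 : ℝ) < K := by exact_mod_cast hKpos
    have key : ‖u j‖ ≤ K * (C + (2 * K)⁻¹ * ‖u j‖) := by
      calc ‖u j‖ ≤ K * ‖Abar (u j)‖ := hub
        _ ≤ K * (‖(A j) (u j)‖ + ‖(Abar - A j) (u j)‖) := by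
            apply mul_le_mul_of_nonneg_left h1 hK0.le
        _ ≤ K * (C + (2 * K)⁻¹ * ‖u j‖) := by
            apply mul_le_mul_of_nonneg_left _ hK0.le
            exact add_le_add hjC h2
    have hhalf : (K : ℝ) * (2 * K)⁻¹ = 1 / 2 := by
      push_cast; rw [mul_inv, ← mul_assoc, mul_comm (K:ℝ), mul_assoc, mul_inv_cancel₀ hK0.ne', mul_one, one_div]
    have expand : (K : ℝ) * (C + (2 * K)⁻¹ * ‖u j‖)
        = K * C + ((K : ℝ) * (2 * K)⁻¹) * ‖u j‖ := by ring
    rw [expand, hhalf] at key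
    linarith
  -- (Abar - A j) (u j) → 0
  have hdiff0 : Tendsto (fun j => (Abar - A j) (u j)) atTop (𝓝 0) := by
    apply squeeze_zero_norm' (a := fun j => ‖Abar - A j‖ * (2 * K * C))
    · filter_upwards [hu_bdd] with j hj
      calc ‖(Abar - A j) (u j)‖ ≤ ‖Abar - A j‖ * ‖u j‖ :=
            ContinuousLinearMap.le_opNorm _ _
        _ ≤ ‖Abar - A j‖ * (2 * K * C) := by
            apply mul_le_mul_of_nonneg_left hj (norm_nonneg _)
    · have h1 : Tendsto (fun j => ‖Abar - A j‖) atTop (𝓝 0) := by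
        have h2 := (tendsto_sub_nhds_zero_iff.mpr hAcont).norm
        have : (fun j => ‖Abar - A j‖) = fun j => ‖A j - Abar‖ := by
          funext j; rw [norm_sub_rev]
        rw [this]; simpa using h2
      have := h1.mul_const (2 * K * C)
      simpa using this
  -- Abar (u j) → -∇F(w̄)
  have hAbaru : Tendsto (fun j => Abar (u j)) atTop (𝓝 (-(gradient F wbar))) := by
    have heq : (fun j => Abar (u j)) = fun j => (A j) (u j) + (Abar - A j) (u j) := by
      funext j; simp [ContinuousLinearMap.sub_apply]
    rw [heq]
    have := hAu.add hdiff0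
    simpa using this
  -- closed range argument
  have hrange_closed : IsClosed (LinearMap.range (Abar : EuclideanSpace ℝ (Fin M) →ₗ[ℝ] EuclideanSpace ℝ (Fin N)) : Set (EuclideanSpace ℝ (Fin N))) :=
    Submodule.closed_of_finiteDimensional _
  have hmem : -(gradient F wbar) ∈ (LinearMap.range (Abar : EuclideanSpace ℝ (Fin M) →ₗ[ℝ] EuclideanSpace ℝ (Fin N)) : Set (EuclideanSpace ℝ (Fin N))) := by
    apply hrange_closed.mem_of_tendsto hAbaru
    filter_upwards with j
    exact ⟨u j, rfl⟩
  obtain ⟨v, hv⟩ := hmem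
  exact ⟨-v, by rw [map_neg]; simp only [ContinuousLinearMap.coe_coe] at hv; rw [hv]; simp⟩
end

section
/- Let F : ℝᴺ → ℝ and c : ℝᴺ → ℝᴹ be continuously differentiable. Suppose {ε_k} is a sequence of positive reals with ε_k → 0, {γ_k} is a sequence of positive reals with γ_k → ∞, and {w_k} is a sequence in ℝᴺ satisfying ‖∇F(w_k) + γ_k (Dc(w_k))* c(w_k)‖ ≤ ε_k for all k. If w̄ is the limit of some subsequence of {w_k}, then (Dc(w̄))* c(w̄) = 0. If, in addition, (Dc(w̄))* : ℝᴹ → ℝᴺ is injective, then c(w̄) = 0, i.e., the limit point is primal feasible for the constraint c(w) = 0. -/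
open scoped Topology
open Filter

/-- **Primal feasibility of penalty-method limit points.**
If `F : ℝᴺ → ℝ` and `c : ℝᴺ → ℝᴹ` are continuously differentiable, `ε_k > 0` with
`ε_k → 0`, `γ_k > 0` with `γ_k → ∞`, and `w_k` satisfies
`‖∇F(w_k) + γ_k (Dc(w_k))* c(w_k)‖ ≤ ε_k` for all `k`, then any limit point `w̄` of
`{w_k}` satisfies `(Dc(w̄))* c(w̄) = 0`; if moreover `(Dc(w̄))*` is injective, then
`c(w̄) = 0`, i.e. `w̄` is primal feasible for the constraint `c(w) = 0`. -/
theorem penalty_limit_point_primal_feasible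
    {N M : ℕ}
    (F : EuclideanSpace ℝ (Fin N) → ℝ) (c : EuclideanSpace ℝ (Fin N) → EuclideanSpace ℝ (Fin M))
    (hF : ContDiff ℝ 1 F) (hc : ContDiff ℝ 1 c)
    (ε : ℕ → ℝ) (hεpos : ∀ k, 0 < ε k) (hεlim : Tendsto ε atTop (𝓝 0))
    (γ : ℕ → ℝ) (hγpos : ∀ k, 0 < γ k) (hγlim : Tendsto γ atTop atTop)
    (w : ℕ → EuclideanSpace ℝ (Fin N))
    (htol : ∀ k,
      ‖gradient F (w k) + γ k • (ContinuousLinearMap.adjoint (fderiv ℝ c (w k))) (c (w k))‖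
        ≤ ε k)
    (wbar : EuclideanSpace ℝ (Fin N))
    (φ : ℕ → ℕ) (hφ : StrictMono φ)
    (hlim : Tendsto (fun j => w (φ j)) atTop (𝓝 wbar)) :
    (ContinuousLinearMap.adjoint (fderiv ℝ c wbar)) (c wbar) = 0 ∧
      (Function.Injective (ContinuousLinearMap.adjoint (fderiv ℝ c wbar)) → c wbar = 0) := by
  set A : EuclideanSpace ℝ (Fin N) → EuclideanSpace ℝ (Fin N) :=
    fun x => (ContinuousLinearMap.adjoint (fderiv ℝ c x)) (c x) with hA
  have hfderiv_cont : Continuous fun x => fderiv ℝ c x := hc.continuous_fderiv one_ne_zero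
  have hAcont : Continuous A := by
    exact ((LinearIsometryEquiv.continuous ContinuousLinearMap.adjoint).comp
        hfderiv_cont).clm_apply hc.continuous
  have hgradcont : Continuous (gradient F) := by
    unfold gradient
    exact (LinearIsometryEquiv.continuous _).comp (hF.continuous_fderiv one_ne_zero)
  set g : ℕ → EuclideanSpace ℝ (Fin N) := fun j => gradient F (w (φ j)) with hg
  set v : ℕ → EuclideanSpace ℝ (Fin N) := fun j => γ (φ j) • A (w (φ j)) with hv
  have hsum : Tendsto (fun j => g j + v j) atTop (𝓝 0) := by
    refine squeeze_zero_norm (fun j => htol (φ j)) (hεlim.comp hφ.tendsto_atTop)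
  have hgt : Tendsto g atTop (𝓝 (gradient F wbar)) := (hgradcont.tendsto wbar).comp hlim
  have hvt : Tendsto v atTop (𝓝 (0 - gradient F wbar)) := by
    have : v = fun j => (g j + v j) - g j := by funext j; abel
    rw [this]
    exact hsum.sub hgt
  have hγinv : Tendsto (fun j => (γ (φ j))⁻¹) atTop (𝓝 0) :=
    (hγlim.comp hφ.tendsto_atTop).inv_tendsto_atTop
  have hAc : Tendsto (fun j => A (w (φ j))) atTop (𝓝 0) := by
    have heq : (fun j => A (w (φ j))) = fun j => (γ (φ j))⁻¹ • v j := by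
      funext j
      simp only [hv, smul_smul, inv_mul_cancel₀ (hγpos (φ j)).ne', one_smul]
    rw [heq]
    simpa using hγinv.smul hvt
  have hAc' : Tendsto (fun j => A (w (φ j))) atTop (𝓝 (A wbar)) :=
    (hAcont.tendsto wbar).comp hlim
  have h0 : A wbar = 0 := tendsto_nhds_unique hAc' hAc
  refine ⟨h0, fun hinj => ?_⟩
  apply hinj
  rw [map_zero]
  exact h0
end

section
/- Let F : ℝᴺ → ℝ and c : ℝᴺ → ℝᴹ be continuously differentiable. Suppose {ε_k} is a sequence of positive reals with ε_k → 0, {γ_k} is a sequence of positive reals with γ_k → ∞, {w_k} is a sequence in ℝᴺ satisfying ‖∇F(w_k) + γ_k (Dc(w_k))* c(w_k)‖ ≤ ε_k for all k, and a subsequence {w_{k_j}} converges to a point w̄ at which Dc(w̄) : ℝᴺ → ℝᴹ is surjective. Define the multiplier estimates μ_k := −γ_k c(w_k). Then along the subsequence, μ_{k_j} converges to μ̄ := (Dc(w̄) ∘ (Dc(w̄))*)⁻¹ (Dc(w̄) ∇F(w̄)), and this limit satisfies the stationarity condition ∇F(w̄) = (Dc(w̄))* μ̄. -/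
open scoped Topology
open Filter

open scoped RealInnerProductSpace

private lemma tendsto_clm_apply_aux {E G : Type*} [NormedAddCommGroup E] [NormedSpace ℝ E]
    [NormedAddCommGroup G] [NormedSpace ℝ G] {T : ℕ → E →L[ℝ] G} {Tl : E →L[ℝ] G}
    {v : ℕ → E} {vl : E} (hT : Filter.Tendsto T Filter.atTop (𝓝 Tl))
    (hv : Filter.Tendsto v Filter.atTop (𝓝 vl)) :
    Filter.Tendsto (fun j => T j (v j)) Filter.atTop (𝓝 (Tl vl)) :=
  (isBoundedBilinearMap_apply.continuous.tendsto (Tl, vl)).comp (hT.prodMk_nhds hv)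

set_option maxHeartbeats 1000000 in
/-- **Convergence of the penalty multiplier estimates.**
Under the tolerance condition `‖∇F(w_k) + γ_k (Dc(w_k))* c(w_k)‖ ≤ ε_k` with `ε_k → 0`,
`γ_k > 0`, `γ_k → ∞`, if a subsequence `w_{k_j} → w̄` with `Dc(w̄)` surjective, then the
multiplier estimates `μ_k := −γ_k c(w_k)` converge along the subsequence to
`μ̄ := (Dc(w̄) ∘ (Dc(w̄))*)⁻¹ (Dc(w̄) ∇F(w̄))` (the inverse is taken via `Ring.inverse`,
which agrees with the true inverse since `Dc(w̄) ∘ (Dc(w̄))*` is invertible by surjectivity),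
and `μ̄` satisfies the stationarity condition `∇F(w̄) = (Dc(w̄))* μ̄`. -/
theorem penalty_multiplier_estimates_converge
    {N M : ℕ}
    (F : EuclideanSpace ℝ (Fin N) → ℝ) (c : EuclideanSpace ℝ (Fin N) → EuclideanSpace ℝ (Fin M))
    (hF : ContDiff ℝ 1 F) (hc : ContDiff ℝ 1 c)
    (ε : ℕ → ℝ) (hεpos : ∀ k, 0 < ε k) (hεlim : Tendsto ε atTop (𝓝 0))
    (γ : ℕ → ℝ) (hγpos : ∀ k, 0 < γ k) (hγlim : Tendsto γ atTop atTop)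
    (w : ℕ → EuclideanSpace ℝ (Fin N))
    (htol : ∀ k,
      ‖gradient F (w k) + γ k • (ContinuousLinearMap.adjoint (fderiv ℝ c (w k))) (c (w k))‖
        ≤ ε k)
    (wbar : EuclideanSpace ℝ (Fin N))
    (φ : ℕ → ℕ) (hφ : StrictMono φ)
    (hlim : Tendsto (fun j => w (φ j)) atTop (𝓝 wbar))
    (hLICQ : Function.Surjective (fderiv ℝ c wbar))
    (μ : ℕ → EuclideanSpace ℝ (Fin M)) (hμ : ∀ k, μ k = -(γ k) • c (w k))
    (μbar : EuclideanSpace ℝ (Fin M))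
    (hμbar : μbar =
      Ring.inverse ((fderiv ℝ c wbar).comp (ContinuousLinearMap.adjoint (fderiv ℝ c wbar)))
        ((fderiv ℝ c wbar) (gradient F wbar))) :
    Tendsto (fun j => μ (φ j)) atTop (𝓝 μbar) ∧
      gradient F wbar = (ContinuousLinearMap.adjoint (fderiv ℝ c wbar)) μbar := by
  set A : EuclideanSpace ℝ (Fin N) →L[ℝ] EuclideanSpace ℝ (Fin M) := fderiv ℝ c wbar with hA
  set Aj : ℕ → (EuclideanSpace ℝ (Fin N) →L[ℝ] EuclideanSpace ℝ (Fin M)) :=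
    fun j => fderiv ℝ c (w (φ j)) with hAj
  -- continuity facts
  have hcA : Tendsto Aj atTop (𝓝 A) :=
    ((hc.continuous_fderiv one_ne_zero).tendsto wbar).comp hlim
  have hcAadj : Tendsto (fun j => ContinuousLinearMap.adjoint (Aj j)) atTop
      (𝓝 (ContinuousLinearMap.adjoint A)) :=
    ((ContinuousLinearMap.adjoint : (EuclideanSpace ℝ (Fin N) →L[ℝ] EuclideanSpace ℝ (Fin M))
      ≃ₗᵢ⋆[ℝ] _).continuous.tendsto A).comp hcA
  have hgradcont : Continuous (gradient F) := by
    have : gradient F = fun x =>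
        (InnerProductSpace.toDual ℝ (EuclideanSpace ℝ (Fin N))).symm (fderiv ℝ F x) := rfl
    rw [this]
    exact (InnerProductSpace.toDual ℝ _).symm.continuous.comp (hF.continuous_fderiv one_ne_zero)
  have hg : Tendsto (fun j => gradient F (w (φ j))) atTop (𝓝 (gradient F wbar)) :=
    (hgradcont.tendsto wbar).comp hlim
  -- the residual tends to 0
  have hs : Tendsto (fun j => gradient F (w (φ j)) +
      γ (φ j) • (ContinuousLinearMap.adjoint (Aj j)) (c (w (φ j)))) atTop (𝓝 0) := by
    rw [tendsto_zero_iff_norm_tendsto_zero]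
    exact squeeze_zero (fun j => norm_nonneg _) (fun j => htol (φ j))
      (hεlim.comp hφ.tendsto_atTop)
  -- Aj* (μ (φ j)) → gradient F wbar
  have key : ∀ j, (ContinuousLinearMap.adjoint (Aj j)) (μ (φ j)) =
      gradient F (w (φ j)) - (gradient F (w (φ j)) +
        γ (φ j) • (ContinuousLinearMap.adjoint (Aj j)) (c (w (φ j)))) := by
    intro j
    rw [hμ]
    simp [neg_smul, map_smul, map_neg]
  have hAμ : Tendsto (fun j => (ContinuousLinearMap.adjoint (Aj j)) (μ (φ j))) atTop
      (𝓝 (gradient F wbar)) := by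
    simp only [key]
    simpa using hg.sub hs
  -- apply map
  have bil : Continuous fun p : (EuclideanSpace ℝ (Fin N) →L[ℝ] EuclideanSpace ℝ (Fin M))
      × EuclideanSpace ℝ (Fin N) => p.1 p.2 := isBoundedBilinearMap_apply.continuous
  have bil' : Continuous fun p : (EuclideanSpace ℝ (Fin M) →L[ℝ] EuclideanSpace ℝ (Fin N))
      × EuclideanSpace ℝ (Fin M) => p.1 p.2 := isBoundedBilinearMap_apply.continuous
  have bil'' : Continuous fun p : (EuclideanSpace ℝ (Fin M) →L[ℝ] EuclideanSpace ℝ (Fin M))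
      × EuclideanSpace ℝ (Fin M) => p.1 p.2 := isBoundedBilinearMap_apply.continuous
  set T : EuclideanSpace ℝ (Fin M) →L[ℝ] EuclideanSpace ℝ (Fin M) :=
    A.comp (ContinuousLinearMap.adjoint A) with hT
  set Tj : ℕ → (EuclideanSpace ℝ (Fin M) →L[ℝ] EuclideanSpace ℝ (Fin M)) :=
    fun j => (Aj j).comp (ContinuousLinearMap.adjoint (Aj j)) with hTj
  have hcT : Tendsto Tj atTop (𝓝 T) := by
    have bilc : Continuous fun p : (EuclideanSpace ℝ (Fin N) →L[ℝ] EuclideanSpace ℝ (Fin M))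
        × (EuclideanSpace ℝ (Fin M) →L[ℝ] EuclideanSpace ℝ (Fin N)) => p.1.comp p.2 :=
      isBoundedBilinearMap_comp.continuous
    exact (bilc.tendsto (A, ContinuousLinearMap.adjoint A)).comp (hcA.prodMk_nhds hcAadj)
  clear_value T Tj A Aj
  clear key htol hμ hA hAj
  -- T is a unit
  have h0 : ∀ v, T v = 0 → v = 0 := by
    intro v hv
    have hAv : (ContinuousLinearMap.adjoint A) v = 0 := by
      have h1 : ⟪(ContinuousLinearMap.adjoint A) v, (ContinuousLinearMap.adjoint A) v⟫
          = ⟪v, A ((ContinuousLinearMap.adjoint A) v)⟫ :=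
        ContinuousLinearMap.adjoint_inner_left A ((ContinuousLinearMap.adjoint A) v) v
      have h2 : A ((ContinuousLinearMap.adjoint A) v) = 0 := by
        rw [hT] at hv; simpa using hv
      rw [h2, inner_zero_right] at h1
      exact inner_self_eq_zero.mp h1
    obtain ⟨x, hx⟩ := hLICQ v
    have h3 : ⟪v, v⟫ = 0 := by
      calc ⟪v, v⟫ = ⟪v, A x⟫ := by rw [hx]
        _ = ⟪(ContinuousLinearMap.adjoint A) v, x⟫ :=
            (ContinuousLinearMap.adjoint_inner_left A x v).symm
        _ = 0 := by rw [hAv, inner_zero_left]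
    exact inner_self_eq_zero.mp h3
  have hinj : Function.Injective T := (injective_iff_map_eq_zero T).mpr h0
  have hsurj : Function.Surjective T := by
    have h := LinearMap.injective_iff_surjective
      (f := (T : EuclideanSpace ℝ (Fin M) →ₗ[ℝ] EuclideanSpace ℝ (Fin M)))
    exact h.mp hinj
  have hUnit : IsUnit T := by
    let e := (LinearEquiv.ofBijective (T : EuclideanSpace ℝ (Fin M) →ₗ[ℝ]
      EuclideanSpace ℝ (Fin M)) ⟨hinj, hsurj⟩).toContinuousLinearEquiv
    exact ⟨e.toUnit, by ext x; rfl⟩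
  -- T_j μ_j → A gbar
  have hTμ : Tendsto (fun j => Tj j (μ (φ j))) atTop (𝓝 (A (gradient F wbar))) := by
    simp only [hTj, ContinuousLinearMap.comp_apply]
    exact (bil.tendsto (A, gradient F wbar)).comp (hcA.prodMk_nhds hAμ)
  -- inverse converges
  have hinvT : Tendsto (fun j => Ring.inverse (Tj j)) atTop (𝓝 (Ring.inverse T)) := by
    have := (NormedRing.inverse_continuousAt hUnit.unit).tendsto
    rw [hUnit.unit_spec] at this
    exact this.comp hcT
  have hν : Tendsto (fun j => Ring.inverse (Tj j) (Tj j (μ (φ j)))) atTop (𝓝 μbar) := by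
    rw [hμbar]
    exact (bil''.tendsto (Ring.inverse T, A (gradient F wbar))).comp (hinvT.prodMk_nhds hTμ)
  have hev : ∀ᶠ j in atTop, Ring.inverse (Tj j) (Tj j (μ (φ j))) = μ (φ j) := by
    filter_upwards [hcT.eventually (Units.isOpen.eventually_mem hUnit)] with j hj
    have := Ring.inverse_mul_cancel (Tj j) hj
    calc Ring.inverse (Tj j) (Tj j (μ (φ j))) = (Ring.inverse (Tj j) * Tj j) (μ (φ j)) := rfl
      _ = μ (φ j) := by rw [this]; rfl
  have hμlim : Tendsto (fun j => μ (φ j)) atTop (𝓝 μbar) := hν.congr' hev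
  refine ⟨hμlim, ?_⟩
  have hAμ' : Tendsto (fun j => (ContinuousLinearMap.adjoint (Aj j)) (μ (φ j))) atTop
      (𝓝 ((ContinuousLinearMap.adjoint A) μbar)) :=
    tendsto_clm_apply_aux hcAadj hμlim
  exact tendsto_nhds_unique hAμ hAμ'
-- END
end

section
/- Let f : ℝⁿ × ℝᵐ → ℝ be continuously differentiable and g : ℝⁿ × ℝᵐ → ℝ be twice continuously differentiable, and fix u ∈ ℝⁿ and γ > 0. Suppose v̂ ∈ ℝᵐ is a local minimizer of the function v ↦ f̃(u,v;γ) = f(u,v) + (γ/2)‖∇_v g(u,v)‖², and suppose the Hessian ∇²_vv g(u,v̂) is invertible. Then the u-gradient of the penalty function at (u,v̂) equals the hypergradient formula: ∇_u f̃(u,v̂;γ) = ∇_u f(u,v̂) − ∇²_uv g(u,v̂) (∇²_vv g(u,v̂))⁻¹ ∇_v f(u,v̂). In particular, the right-hand side does not depend on γ. -/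
open scoped Topology

open ContinuousLinearMap InnerProductSpace

section Aux

set_option maxHeartbeats 1000000

variable {E F : Type*} [NormedAddCommGroup E] [InnerProductSpace ℝ E]
  [NormedAddCommGroup F] [InnerProductSpace ℝ F] [CompleteSpace E] [CompleteSpace F]

/-- Derivative of the squared norm of a differentiable map. -/
lemma aux_hasFDerivAt_norm_sq {G : E → F} {G' : E →L[ℝ] F} {x : E}
    (h : HasFDerivAt G G' x) :
    HasFDerivAt (fun y => ‖G y‖ ^ 2)
      (toDual ℝ E ((2:ℝ) • (adjoint G') (G x))) x := by
  have h1 := h.inner ℝ h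
  have heq : (fun y => ‖G y‖ ^ 2) = fun y => (inner ℝ (G y) (G y) : ℝ) := by
    funext y; rw [real_inner_self_eq_norm_sq]
  rw [heq]
  refine h1.congr_fderiv ?_
  symm
  ext y
  simp only [toDual_apply_apply, fderivInnerCLM_apply, ContinuousLinearMap.coe_comp',
    Function.comp_apply, ContinuousLinearMap.prod_apply, real_inner_smul_left,
    ContinuousLinearMap.adjoint_inner_left]
  rw [real_inner_comm (G' y) (G x)]
  ring

/-- General form of the hypergradient lemma over abstract real inner product spaces. -/
lemma aux_penalty_u_gradient
    (f g : E → F → ℝ)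
    (hf : ContDiff ℝ 1 (fun p : E × F => f p.1 p.2))
    (hg : ContDiff ℝ 2 (fun p : E × F => g p.1 p.2))
    (u : E) (γ : ℝ) (hγ : 0 < γ) (vhat : F)
    (hmin : IsLocalMin (fun v => f u v + (γ / 2) * ‖gradient (g u) v‖ ^ 2) vhat)
    (hinv : IsUnit (fderiv ℝ (gradient (g u)) vhat)) :
    gradient (fun u' => f u' vhat + (γ / 2) * ‖gradient (g u') vhat‖ ^ 2) u =
      gradient (fun u' => f u' vhat) u -
        (ContinuousLinearMap.adjoint (fderiv ℝ (fun u' => gradient (g u') vhat) u))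
          (Ring.inverse (fderiv ℝ (gradient (g u)) vhat) (gradient (f u) vhat)) := by
  set g₂ : E × F → ℝ := fun p => g p.1 p.2 with hg₂def
  set f₂ : E × F → ℝ := fun p => f p.1 p.2 with hf₂def
  -- basic differentiability
  have hdg : Differentiable ℝ g₂ := hg.differentiable (by norm_num)
  have hdf : Differentiable ℝ f₂ := hf.differentiable (by norm_num)
  have hg1 : ContDiff ℝ 1 (fderiv ℝ g₂) := hg.fderiv_right (by norm_num)
  -- the partial v-derivative of g
  set D : E × F → (F →L[ℝ] ℝ) := fun p => (fderiv ℝ g₂ p).comp (inr ℝ E F) with hDdef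
  have hgp : ∀ (u' : E) (v : F), HasFDerivAt (g u') (D (u', v)) v := by
    intro u' v
    exact (hdg (u', v)).hasFDerivAt.comp v (hasFDerivAt_prodMk_right u' v)
  set w : E × F → F := fun p => (toDual ℝ F).symm (D p) with hwdef
  have hgrad : ∀ (u' : E) (v : F), gradient (g u') v = w (u', v) := by
    intro u' v
    rw [gradient, (hgp u' v).fderiv]
  -- the linear map `φ ↦ φ ∘ inr`
  set L :=
    (ContinuousLinearMap.compL ℝ F (E × F) ℝ).flip (inr ℝ E F) with hLdef
  have hDL : D = fun p => L (fderiv ℝ g₂ p) := rfl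
  -- toDual.symm as a continuous linear map
  set e : ((F →L[ℝ] ℝ)) →L[ℝ] F :=
    (InnerProductSpace.toDual ℝ F).symm.toContinuousLinearEquiv.toContinuousLinearMap
    with hedef
  have hew : w = fun p => e (D p) := rfl
  -- second derivative data
  set A : (E × F) →L[ℝ] ((E × F) →L[ℝ] ℝ) := fderiv ℝ (fderiv ℝ g₂) (u, vhat) with hAdef
  have hA : HasFDerivAt (fderiv ℝ g₂) A (u, vhat) :=
    ((hg1.differentiable (by norm_num)) (u, vhat)).hasFDerivAt
  have hB : HasFDerivAt D (L.comp A) (u, vhat) := by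
    rw [hDL]; exact L.hasFDerivAt.comp (u, vhat) hA
  set W : (E × F) →L[ℝ] F := e.comp (L.comp A) with hWdef
  have hWd : HasFDerivAt w W (u, vhat) := by
    rw [hew]; exact e.hasFDerivAt.comp (u, vhat) hB
  -- value of W paired with inner products
  have hWin : ∀ (z : E × F) (y : F), (inner ℝ (W z) y : ℝ) = A z (0, y) := by
    intro z y
    show (inner ℝ ((toDual ℝ F).symm (L (A z))) y : ℝ) = A z (0, y)
    rw [toDual_symm_apply]
    rfl
  -- H and K
  set H : F →L[ℝ] F := W.comp (inr ℝ E F) with hHdef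
  set K : E →L[ℝ] F := W.comp (inl ℝ E F) with hKdef
  have hGu : gradient (g u) = fun v => w (u, v) := funext fun v => hgrad u v
  have hHd : HasFDerivAt (fun v => w (u, v)) H vhat :=
    hWd.comp vhat (hasFDerivAt_prodMk_right u vhat)
  have hH : fderiv ℝ (gradient (g u)) vhat = H := by rw [hGu, hHd.fderiv]
  have hKd : HasFDerivAt (fun u' => w (u', vhat)) K u :=
    by
      have t3 := hasFDerivAt_prodMk_left (𝕜 := ℝ) u vhat
      have t4 := hWd.comp u t3
      exact t4
  have hGv : (fun u' => gradient (g u') vhat) = fun u' => w (u', vhat) :=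
    funext fun u' => hgrad u' vhat
  have hK : fderiv ℝ (fun u' => gradient (g u') vhat) u = K := by rw [hGv, hKd.fderiv]
  -- symmetry of the Hessian
  have hsymm : IsSymmSndFDerivAt ℝ g₂ (u, vhat) :=
    hg.contDiffAt.isSymmSndFDerivAt (by simp [minSmoothness_of_isRCLikeNormedField])
  have hHsym : ∀ x y : F, (inner ℝ (H x) y : ℝ) = inner ℝ x (H y) := by
    intro x y
    have h1 : (inner ℝ (H x) y : ℝ) = A (0, x) (0, y) := hWin _ y
    have h2 : (inner ℝ (H y) x : ℝ) = A (0, y) (0, x) := hWin _ x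
    rw [h1, hsymm (0, x) (0, y), ← h2, real_inner_comm]
  have hHadj : adjoint H = H := by
    symm
    rw [ContinuousLinearMap.eq_adjoint_iff]
    exact hHsym
  -- first-order condition at vhat
  set w₀ : F := w (u, vhat) with hw₀def
  have hfu : HasFDerivAt (f u) (fderiv ℝ (f u) vhat) vhat := by
    have : DifferentiableAt ℝ (f u) vhat :=
      (hdf (u, vhat)).comp vhat ((differentiableAt_const u).prodMk differentiableAt_id)
    exact this.hasFDerivAt
  have hsq_v : HasFDerivAt (fun v => ‖gradient (g u) v‖ ^ 2)
      (toDual ℝ F ((2:ℝ) • (adjoint H) w₀)) vhat := by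
    have := aux_hasFDerivAt_norm_sq hHd
    rw [hGu]
    exact this
  have htot : HasFDerivAt (fun v => f u v + (γ / 2) * ‖gradient (g u) v‖ ^ 2)
      (fderiv ℝ (f u) vhat + (γ / 2) • toDual ℝ F ((2:ℝ) • (adjoint H) w₀)) vhat :=
    hfu.add (hsq_v.const_mul (γ / 2))
  have hFOC : fderiv ℝ (f u) vhat + (γ / 2) • toDual ℝ F ((2:ℝ) • (adjoint H) w₀) = 0 :=
    hmin.hasFDerivAt_eq_zero htot
  have hgradfu : toDual ℝ F (gradient (f u) vhat) = fderiv ℝ (f u) vhat := by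
    rw [gradient, LinearIsometryEquiv.apply_symm_apply]
  have hFOC' : gradient (f u) vhat + γ • H w₀ = 0 := by
    apply (toDual ℝ F).injective
    rw [map_zero, map_add, hgradfu, LinearIsometryEquiv.map_smulₛₗ]
    rw [← hFOC]
    congr 1
    rw [hHadj]
    ext y
    simp only [toDual_apply_apply, real_inner_smul_left, ContinuousLinearMap.coe_smul',
      Pi.smul_apply, smul_eq_mul, starRingEnd_apply, star_trivial]
    ring
  -- compute `Ring.inverse H (gradient (f u) vhat)`
  have hinvH : IsUnit H := by rwa [hH] at hinv
  have hRinv : Ring.inverse H (gradient (f u) vhat) = -(γ • w₀) := by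
    have h1 : gradient (f u) vhat = -(γ • H w₀) := by
      rw [eq_neg_iff_add_eq_zero]; exact hFOC'
    rw [h1, map_neg, map_smul]
    congr 2
    have h2 : Ring.inverse H * H = 1 := Ring.inverse_mul_cancel H hinvH
    calc Ring.inverse H (H w₀) = (Ring.inverse H * H) w₀ := rfl
      _ = w₀ := by rw [h2]; rfl
  -- compute the LHS gradient
  have hfu' : HasFDerivAt (fun u' => f u' vhat) (fderiv ℝ (fun u' => f u' vhat) u) u := by
    have : DifferentiableAt ℝ (fun u' => f u' vhat) u := by
      have t5 := (hdf (u, vhat)).comp u ((differentiableAt_id (𝕜 := ℝ) (x := u)).prodMk (differentiableAt_const (c := vhat) (x := u)))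
      exact t5
    exact this.hasFDerivAt
  have hsq_u : HasFDerivAt (fun u' => ‖gradient (g u') vhat‖ ^ 2)
      (toDual ℝ E ((2:ℝ) • (adjoint K) w₀)) u := by
    have := aux_hasFDerivAt_norm_sq hKd
    rw [show (fun u' => ‖gradient (g u') vhat‖ ^ 2) = fun u' => ‖w (u', vhat)‖ ^ 2 by
      funext u'; rw [hgrad]]
    exact this
  have htotu : HasFDerivAt (fun u' => f u' vhat + (γ / 2) * ‖gradient (g u') vhat‖ ^ 2)
      (toDual ℝ E (gradient (fun u' => f u' vhat) u + γ • (adjoint K) w₀)) u := by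
    have h := hfu'.add (hsq_u.const_mul (γ / 2))
    refine h.congr_fderiv ?_
    symm
    rw [map_add, LinearIsometryEquiv.map_smulₛₗ]
    congr 1
    · rw [gradient, LinearIsometryEquiv.apply_symm_apply]
    · ext y
      simp only [toDual_apply_apply, real_inner_smul_left, ContinuousLinearMap.coe_smul',
        Pi.smul_apply, smul_eq_mul, starRingEnd_apply, star_trivial]
      ring
  have hLHS : gradient (fun u' => f u' vhat + (γ / 2) * ‖gradient (g u') vhat‖ ^ 2) u =
      gradient (fun u' => f u' vhat) u + γ • (adjoint K) w₀ := by
    rw [gradient, htotu.fderiv, LinearIsometryEquiv.symm_apply_apply]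
  -- put everything together
  rw [hLHS, hH, hK, hRinv, map_neg, map_smul, sub_neg_eq_add]

end Aux

/-- **The `u`-gradient of the penalty function equals the hypergradient (Lemma 1).**
Let `f : ℝⁿ × ℝᵐ → ℝ` be `C¹` and `g : ℝⁿ × ℝᵐ → ℝ` be `C²` (curried form), fix `u` and
`γ > 0`. If `v̂` is a local minimizer of `v ↦ f̃(u,v;γ) = f(u,v) + (γ/2)‖∇_v g(u,v)‖²`
and the Hessian `∇²_vv g(u,v̂)` is invertible, then
`∇_u f̃(u,v̂;γ) = ∇_u f(u,v̂) − ∇²_uv g(u,v̂) (∇²_vv g(u,v̂))⁻¹ ∇_v f(u,v̂)`,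
where `∇²_uv g(u,v̂)` is the adjoint of the derivative at `u` of `u ↦ ∇_v g(u,v̂)` and
the Hessian inverse is taken via `Ring.inverse`. In particular the right-hand side does
not depend on `γ`. -/
theorem penalty_u_gradient_is_hypergradient
    {n m : ℕ}
    (f g : EuclideanSpace ℝ (Fin n) → EuclideanSpace ℝ (Fin m) → ℝ)
    (hf : ContDiff ℝ 1 (fun p : EuclideanSpace ℝ (Fin n) × EuclideanSpace ℝ (Fin m) =>
      f p.1 p.2))
    (hg : ContDiff ℝ 2 (fun p : EuclideanSpace ℝ (Fin n) × EuclideanSpace ℝ (Fin m) =>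
      g p.1 p.2))
    (u : EuclideanSpace ℝ (Fin n)) (γ : ℝ) (hγ : 0 < γ)
    (vhat : EuclideanSpace ℝ (Fin m))
    (hmin : IsLocalMin (fun v => f u v + (γ / 2) * ‖gradient (g u) v‖ ^ 2) vhat)
    (hinv : IsUnit (fderiv ℝ (gradient (g u)) vhat)) :
    gradient (fun u' => f u' vhat + (γ / 2) * ‖gradient (g u') vhat‖ ^ 2) u =
      gradient (fun u' => f u' vhat) u -
        (ContinuousLinearMap.adjoint (fderiv ℝ (fun u' => gradient (g u') vhat) u))
          (Ring.inverse (fderiv ℝ (gradient (g u)) vhat) (gradient (f u) vhat)) :=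
  aux_penalty_u_gradient f g hf hg u γ hγ vhat hmin hinv
end

section
/- Let f : ℝⁿ × ℝᵐ → ℝ be continuously differentiable, g : ℝⁿ × ℝᵐ → ℝ be twice continuously differentiable, and v* : ℝⁿ → ℝᵐ be differentiable at u₀ with ∇_v g(u, v*(u)) = 0 for all u in a neighborhood of u₀, and suppose ∇²_vv g(u₀, v*(u₀)) is invertible. Then the gradient of the composed objective φ(u) := f(u, v*(u)) at u₀ (the hypergradient) is given by ∇φ(u₀) = ∇_u f(u₀, v*(u₀)) − ∇²_uv g(u₀, v*(u₀)) (∇²_vv g(u₀, v*(u₀)))⁻¹ ∇_v f(u₀, v*(u₀)). -/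
open scoped Topology
open Filter ContinuousLinearMap
open scoped RealInnerProductSpace

/-- **Hypergradient formula for the bilevel objective.**
Let `f : ℝⁿ × ℝᵐ → ℝ` be `C¹` and `g : ℝⁿ × ℝᵐ → ℝ` be `C²` (curried form), and let
`v* : ℝⁿ → ℝᵐ` be differentiable at `u₀` with `∇_v g(u, v*(u)) = 0` near `u₀` and
`∇²_vv g(u₀, v*(u₀))` invertible. Then the gradient of `φ(u) := f(u, v*(u))` at `u₀` is
`∇φ(u₀) = ∇_u f(u₀,v̄) − ∇²_uv g(u₀,v̄) (∇²_vv g(u₀,v̄))⁻¹ ∇_v f(u₀,v̄)` with `v̄ = v*(u₀)`,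
where `∇²_uv g(u₀,v̄)` is the adjoint of the derivative at `u₀` of `u ↦ ∇_v g(u,v̄)` and
the Hessian inverse is taken via `Ring.inverse`. -/
theorem hypergradient_formula
    {n m : ℕ}
    (f g : EuclideanSpace ℝ (Fin n) → EuclideanSpace ℝ (Fin m) → ℝ)
    (hf : ContDiff ℝ 1 (fun p : EuclideanSpace ℝ (Fin n) × EuclideanSpace ℝ (Fin m) =>
      f p.1 p.2))
    (hg : ContDiff ℝ 2 (fun p : EuclideanSpace ℝ (Fin n) × EuclideanSpace ℝ (Fin m) =>
      g p.1 p.2))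
    (vstar : EuclideanSpace ℝ (Fin n) → EuclideanSpace ℝ (Fin m))
    (u₀ : EuclideanSpace ℝ (Fin n))
    (hdiff : DifferentiableAt ℝ vstar u₀)
    (hstat : ∀ᶠ u in 𝓝 u₀, gradient (g u) (vstar u) = 0)
    (hinv : IsUnit (fderiv ℝ (gradient (g u₀)) (vstar u₀))) :
    gradient (fun u => f u (vstar u)) u₀ =
      gradient (fun u => f u (vstar u₀)) u₀ -
        (ContinuousLinearMap.adjoint (fderiv ℝ (fun u => gradient (g u) (vstar u₀)) u₀))
          (Ring.inverse (fderiv ℝ (gradient (g u₀)) (vstar u₀))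
            (gradient (f u₀) (vstar u₀))) := by
  set v0 := vstar u₀ with hv0
  -- gradient/inner basic lemmas
  have hgradE : ∀ (q : (EuclideanSpace ℝ (Fin n)) → ℝ) (x y : (EuclideanSpace ℝ (Fin n))), ⟪gradient q x, y⟫ = fderiv ℝ q x y := by
    intro q x y; rw [gradient]; exact InnerProductSpace.toDual_symm_apply
  have hgradF : ∀ (q : (EuclideanSpace ℝ (Fin m)) → ℝ) (x y : (EuclideanSpace ℝ (Fin m))), ⟪gradient q x, y⟫ = fderiv ℝ q x y := by
    intro q x y; rw [gradient]; exact InnerProductSpace.toDual_symm_apply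
  -- derivatives on the f side
  have hfd : Differentiable ℝ (fun p : (EuclideanSpace ℝ (Fin n)) × (EuclideanSpace ℝ (Fin m)) => f p.1 p.2) := hf.differentiable one_ne_zero
  set P := fderiv ℝ (fun p : (EuclideanSpace ℝ (Fin n)) × (EuclideanSpace ℝ (Fin m)) => f p.1 p.2) (u₀, v0) with hP
  have hPF : HasFDerivAt (fun p : (EuclideanSpace ℝ (Fin n)) × (EuclideanSpace ℝ (Fin m)) => f p.1 p.2) P (u₀, v0) := (hfd _).hasFDerivAt
  set D := fderiv ℝ vstar u₀ with hD
  have hJ : HasFDerivAt (fun u : (EuclideanSpace ℝ (Fin n)) => (u, vstar u)) ((ContinuousLinearMap.id ℝ (EuclideanSpace ℝ (Fin n))).prod D) u₀ :=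
    HasFDerivAt.prodMk (hasFDerivAt_id u₀) hdiff.hasFDerivAt
  have hphi : HasFDerivAt (fun u => f u (vstar u))
      (P.comp ((ContinuousLinearMap.id ℝ (EuclideanSpace ℝ (Fin n))).prod D)) u₀ := by have h := hPF.comp u₀ hJ; exact h
  have hf1 : HasFDerivAt (fun u => f u v0) (P.comp (inl ℝ (EuclideanSpace ℝ (Fin n)) (EuclideanSpace ℝ (Fin m)))) u₀ :=
    by have h := hPF.comp u₀ (hasFDerivAt_prodMk_left (𝕜 := ℝ) u₀ v0); exact h
  have hf2 : HasFDerivAt (f u₀) (P.comp (inr ℝ (EuclideanSpace ℝ (Fin n)) (EuclideanSpace ℝ (Fin m)))) v0 :=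
    hPF.comp v0 (hasFDerivAt_prodMk_right u₀ v0)
  -- the map G(u,v) = ∇_v g(u, v) is C¹
  have hgd : Differentiable ℝ (fun p : (EuclideanSpace ℝ (Fin n)) × (EuclideanSpace ℝ (Fin m)) => g p.1 p.2) := hg.differentiable (by norm_num)
  set G : (EuclideanSpace ℝ (Fin n)) × (EuclideanSpace ℝ (Fin m)) → (EuclideanSpace ℝ (Fin m)) := fun p => gradient (g p.1) p.2 with hGdef
  have hGeq : G = fun p : (EuclideanSpace ℝ (Fin n)) × (EuclideanSpace ℝ (Fin m)) =>
      (InnerProductSpace.toDual ℝ (EuclideanSpace ℝ (Fin m))).symm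
        ((fderiv ℝ (fun q : (EuclideanSpace ℝ (Fin n)) × (EuclideanSpace ℝ (Fin m)) => g q.1 q.2) p).comp (inr ℝ (EuclideanSpace ℝ (Fin n)) (EuclideanSpace ℝ (Fin m)))) := by
    funext p
    have h1 : HasFDerivAt (g p.1)
        ((fderiv ℝ (fun q : (EuclideanSpace ℝ (Fin n)) × (EuclideanSpace ℝ (Fin m)) => g q.1 q.2) p).comp (inr ℝ (EuclideanSpace ℝ (Fin n)) (EuclideanSpace ℝ (Fin m)))) p.2 :=
      by have h := (hgd p).hasFDerivAt.comp p.2 (hasFDerivAt_prodMk_right (𝕜 := ℝ) p.1 p.2); exact h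
    rw [hGdef]
    show gradient (g p.1) p.2 = _
    rw [gradient, h1.fderiv]
  have hgG : ContDiff ℝ 1 G := by
    rw [hGeq]
    exact (InnerProductSpace.toDual ℝ (EuclideanSpace ℝ (Fin m))).symm.contDiff.comp
      ((hg.fderiv_right (by norm_num)).clm_comp contDiff_const)
  have hGdiff : Differentiable ℝ G := hgG.differentiable one_ne_zero
  set Q := fderiv ℝ G (u₀, v0) with hQ
  have hGF : HasFDerivAt G Q (u₀, v0) := (hGdiff _).hasFDerivAt
  have hB : HasFDerivAt (fun u => gradient (g u) v0) (Q.comp (inl ℝ (EuclideanSpace ℝ (Fin n)) (EuclideanSpace ℝ (Fin m)))) u₀ :=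
    by have h := hGF.comp u₀ (hasFDerivAt_prodMk_left (𝕜 := ℝ) u₀ v0); exact h
  have hH : HasFDerivAt (gradient (g u₀)) (Q.comp (inr ℝ (EuclideanSpace ℝ (Fin n)) (EuclideanSpace ℝ (Fin m)))) v0 :=
    hGF.comp v0 (hasFDerivAt_prodMk_right u₀ v0)
  have hBeq : fderiv ℝ (fun u => gradient (g u) v0) u₀ = Q.comp (inl ℝ (EuclideanSpace ℝ (Fin n)) (EuclideanSpace ℝ (Fin m))) := hB.fderiv
  have hHeq : fderiv ℝ (gradient (g u₀)) v0 = Q.comp (inr ℝ (EuclideanSpace ℝ (Fin n)) (EuclideanSpace ℝ (Fin m))) := hH.fderiv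
  -- implicit differentiation: B + H D = 0
  have hchain : HasFDerivAt (fun u => G (u, vstar u))
      (Q.comp ((ContinuousLinearMap.id ℝ (EuclideanSpace ℝ (Fin n))).prod D)) u₀ := by have h := hGF.comp u₀ hJ; exact h
  have hzero : Q.comp ((ContinuousLinearMap.id ℝ (EuclideanSpace ℝ (Fin n))).prod D) = 0 := by
    have hEE : (fun u => G (u, vstar u)) =ᶠ[𝓝 u₀] (fun _ : (EuclideanSpace ℝ (Fin n)) => (0 : (EuclideanSpace ℝ (Fin m)))) := hstat
    rw [← hchain.fderiv, hEE.fderiv_eq]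
    simp
  have hkey : ∀ w : (EuclideanSpace ℝ (Fin n)), Q (0, D w) = - Q (w, 0) := by
    intro w
    have h0 : Q (w, D w) = 0 := by
      have := congrArg (fun L : (EuclideanSpace ℝ (Fin n)) →L[ℝ] (EuclideanSpace ℝ (Fin m)) => L w) hzero
      simpa using this
    have hsplit : ((w, D w) : (EuclideanSpace ℝ (Fin n)) × (EuclideanSpace ℝ (Fin m))) = (w, 0) + (0, D w) := by simp
    rw [hsplit, map_add] at h0
    linear_combination (norm := module) h0
  -- self-adjointness of the Hessian H
  have hg0 : ContDiff ℝ 2 (g u₀) := by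
    exact hg.comp (ContDiff.prodMk (contDiff_const (c := u₀)) contDiff_id)
  have hfall : ∀ y, HasFDerivAt (g u₀) (fderiv ℝ (g u₀) y) y := fun y =>
    ((hg0.differentiable (by norm_num)) y).hasFDerivAt
  have hf'' : HasFDerivAt (fderiv ℝ (g u₀)) (fderiv ℝ (fderiv ℝ (g u₀)) v0) v0 :=
    (((hg0.fderiv_right (by norm_num)).differentiable one_ne_zero) v0).hasFDerivAt
  have hsymm : ∀ x y : (EuclideanSpace ℝ (Fin m)), fderiv ℝ (fderiv ℝ (g u₀)) v0 x y
      = fderiv ℝ (fderiv ℝ (g u₀)) v0 y x := fun x y =>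
    second_derivative_symmetric hfall hf'' x y
  have hax : ∀ z w : (EuclideanSpace ℝ (Fin m)),
      ⟪(Q.comp (inr ℝ (EuclideanSpace ℝ (Fin n)) (EuclideanSpace ℝ (Fin m)))) z, w⟫
        = fderiv ℝ (fderiv ℝ (g u₀)) v0 z w := by
    intro z w
    have h1 : HasFDerivAt (fun v : EuclideanSpace ℝ (Fin m) => ⟪gradient (g u₀) v, w⟫)
        (((innerSL ℝ).flip w).comp
          (Q.comp (inr ℝ (EuclideanSpace ℝ (Fin n)) (EuclideanSpace ℝ (Fin m))))) v0 :=
      (((innerSL ℝ).flip w).hasFDerivAt).comp v0 hH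
    have h2 : HasFDerivAt (fun v : EuclideanSpace ℝ (Fin m) => fderiv ℝ (g u₀) v w)
        ((ContinuousLinearMap.apply ℝ ℝ w).comp (fderiv ℝ (fderiv ℝ (g u₀)) v0)) v0 :=
      ((ContinuousLinearMap.apply ℝ ℝ w).hasFDerivAt).comp v0 hf''
    have heq : (fun v : EuclideanSpace ℝ (Fin m) => ⟪gradient (g u₀) v, w⟫)
        = fun v => fderiv ℝ (g u₀) v w := by
      funext v; exact hgradF _ _ _
    rw [heq] at h1
    have h3 := h1.unique h2
    have h4 := congrArg (fun (L : EuclideanSpace ℝ (Fin m) →L[ℝ] ℝ) => L z) h3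
    simpa only [ContinuousLinearMap.coe_comp', Function.comp_apply,
      ContinuousLinearMap.flip_apply, innerSL_apply_apply, ContinuousLinearMap.apply_apply,
      ContinuousLinearMap.inr_apply] using h4
  have hsa : ∀ x y : (EuclideanSpace ℝ (Fin m)), ⟪fderiv ℝ (gradient (g u₀)) v0 x, y⟫
      = ⟪x, fderiv ℝ (gradient (g u₀)) v0 y⟫ := by
    intro x y
    rw [hHeq, hax, real_inner_comm, hax]
    exact hsymm x y
  -- finish
  set H := fderiv ℝ (gradient (g u₀)) v0 with hHdef
  set K := Ring.inverse H with hK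
  set gv := gradient (f u₀) v0 with hgv
  have hHK : ∀ z : (EuclideanSpace ℝ (Fin m)), H (K z) = z := by
    intro z
    have : H * K = 1 := Ring.mul_inverse_cancel H hinv
    calc H (K z) = (H * K) z := (ContinuousLinearMap.mul_apply H K z).symm
    _ = z := by rw [this]; rfl
  apply ext_inner_right ℝ
  intro w
  rw [hgradE, hphi.fderiv, inner_sub_left, hgradE, hf1.fderiv,
    ContinuousLinearMap.adjoint_inner_left, hBeq]
  have e1 : (P.comp ((ContinuousLinearMap.id ℝ (EuclideanSpace ℝ (Fin n))).prod D)) w = P (w, 0) + P (0, D w) := by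
    have : ((w, D w) : (EuclideanSpace ℝ (Fin n)) × (EuclideanSpace ℝ (Fin m))) = (w, 0) + (0, D w) := by simp
    simp only [ContinuousLinearMap.coe_comp', Function.comp_apply,
      ContinuousLinearMap.prod_apply, ContinuousLinearMap.coe_id', id_eq]
    rw [this, map_add]
  have e2 : ⟪K gv, (Q.comp (inl ℝ (EuclideanSpace ℝ (Fin n)) (EuclideanSpace ℝ (Fin m)))) w⟫ = - P (0, D w) := by
    have : (Q.comp (inl ℝ (EuclideanSpace ℝ (Fin n)) (EuclideanSpace ℝ (Fin m)))) w = Q (w, 0) := by simp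
    rw [this, ← neg_neg (Q (w, 0)), ← hkey w, inner_neg_right]
    have hQinr : Q (0, D w) = H (D w) := by rw [hHeq]; simp
    rw [hQinr, ← hsa, hHK]
    rw [hgradF, hf2.fderiv]
    simp
  rw [e1, e2]
  have e3 : (P.comp (inl ℝ (EuclideanSpace ℝ (Fin n)) (EuclideanSpace ℝ (Fin m)))) w = P (w, 0) := by simp
  rw [e3]
  ring
end

section
/- Let f : ℝⁿ × ℝᵐ → ℝ be continuous and g : ℝⁿ × ℝᵐ → ℝ be continuously differentiable with g(u,·) convex for every u and with a unique global minimizer v*(u) of g(u,·) for every u. Suppose the bilevel objective u ↦ f(u, v*(u)) attains its global minimum at some u*. Let {γ_k} be a sequence of positive reals with γ_k → ∞, and for each k let (û_k, v̂_k) be a global minimizer over ℝⁿ × ℝᵐ of the penalty function f̃(u,v;γ_k) = f(u,v) + (γ_k/2)‖∇_v g(u,v)‖². Then every limit point (ū, v̄) of the sequence {(û_k, v̂_k)} is a solution of the bilevel problem: v̄ = v*(ū) and f(ū, v̄) ≤ f(u, v*(u)) for all u ∈ ℝⁿ. -/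
open scoped Topology
open Filter

lemma isMin_of_gradient_eq_zero {V : Type*} [NormedAddCommGroup V]
    [InnerProductSpace ℝ V] [CompleteSpace V] {h : V → ℝ}
    (hconv : ConvexOn ℝ Set.univ h) {x : V} (hdx : DifferentiableAt ℝ h x)
    (hgrad : gradient h x = 0) (y : V) : h x ≤ h y := by
  have hfd : fderiv ℝ h x = 0 := by
    have := congrArg (InnerProductSpace.toDual ℝ V) hgrad
    rwa [gradient, LinearIsometryEquiv.apply_symm_apply, map_zero] at this
  set c : ℝ → V := fun t => t • (y - x) + x with hc
  have hφconv : ConvexOn ℝ Set.univ (h ∘ c) := by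
    have := hconv.comp_affineMap (AffineMap.lineMap x y)
    have hceq : (fun t : ℝ => h (AffineMap.lineMap x y t)) = h ∘ c := by
      funext t
      simp [hc, AffineMap.lineMap_apply_module']
    rw [← hceq]; exact this
  have hcder : HasDerivAt c (y - x) 0 := by
    rw [hc]; simpa using ((hasDerivAt_id (0:ℝ)).smul_const (y - x)).add_const x
  have hc0 : c 0 = x := by simp [hc]
  have hdx' : HasFDerivAt h (0 : V →L[ℝ] ℝ) (c 0) := by
    rw [hc0, ← hfd]; exact hdx.hasFDerivAt
  have hder : HasDerivAt (h ∘ c) 0 0 := by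
    simpa using hdx'.comp_hasDerivAt 0 hcder
  have hkey := hφconv.le_slope_of_hasDerivAt (Set.mem_univ (0:ℝ)) (Set.mem_univ (1:ℝ))
    zero_lt_one hder
  have h1 : c 1 = y := by simp [hc]
  rw [slope_def_field] at hkey
  simp only [Function.comp, h1, hc0] at hkey
  linarith [hkey]

/-- **Penalty method solves the bilevel problem (convex lower level, exact minimizers).**
Let `f : ℝⁿ × ℝᵐ → ℝ` be continuous and `g : ℝⁿ × ℝᵐ → ℝ` be `C¹` (curried form) with
`g(u,·)` convex and having a unique global minimizer `v*(u)` for each `u`. Suppose the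
bilevel objective `u ↦ f(u, v*(u))` attains its global minimum at some `u*`. If `γ_k > 0`
with `γ_k → ∞` and `(û_k, v̂_k)` globally minimizes the penalty function
`f̃(u,v;γ_k) = f(u,v) + (γ_k/2)‖∇_v g(u,v)‖²`, then every limit point `(ū,v̄)` of
`{(û_k, v̂_k)}` solves the bilevel problem: `v̄ = v*(ū)` and
`f(ū,v̄) ≤ f(u, v*(u))` for all `u`. -/
theorem penalty_method_solves_bilevel
    {n m : ℕ}
    (f g : EuclideanSpace ℝ (Fin n) → EuclideanSpace ℝ (Fin m) → ℝ)
    (hf : Continuous (fun p : EuclideanSpace ℝ (Fin n) × EuclideanSpace ℝ (Fin m) =>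
      f p.1 p.2))
    (hg : ContDiff ℝ 1 (fun p : EuclideanSpace ℝ (Fin n) × EuclideanSpace ℝ (Fin m) =>
      g p.1 p.2))
    (hconv : ∀ u, ConvexOn ℝ Set.univ (g u))
    (vstar : EuclideanSpace ℝ (Fin n) → EuclideanSpace ℝ (Fin m))
    (hvstar : ∀ u, (∀ v, g u (vstar u) ≤ g u v) ∧ ∀ v, (∀ v', g u v ≤ g u v') → v = vstar u)
    (ustar : EuclideanSpace ℝ (Fin n))
    (hustar : ∀ u, f ustar (vstar ustar) ≤ f u (vstar u))
    (γ : ℕ → ℝ) (hγpos : ∀ k, 0 < γ k) (hγlim : Tendsto γ atTop atTop)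
    (uhat : ℕ → EuclideanSpace ℝ (Fin n)) (vhat : ℕ → EuclideanSpace ℝ (Fin m))
    (hmin : ∀ k, ∀ u v,
      f (uhat k) (vhat k) + (γ k / 2) * ‖gradient (g (uhat k)) (vhat k)‖ ^ 2 ≤
        f u v + (γ k / 2) * ‖gradient (g u) v‖ ^ 2)
    (ubar : EuclideanSpace ℝ (Fin n)) (vbar : EuclideanSpace ℝ (Fin m))
    (φ : ℕ → ℕ) (hφ : StrictMono φ)
    (hlim : Tendsto (fun j => (uhat (φ j), vhat (φ j))) atTop (𝓝 (ubar, vbar))) :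
    vbar = vstar ubar ∧ ∀ u, f ubar vbar ≤ f u (vstar u) := by
  have hGdiff : Differentiable ℝ
      (fun p : EuclideanSpace ℝ (Fin n) × EuclideanSpace ℝ (Fin m) => g p.1 p.2) :=
    hg.differentiable one_ne_zero
  -- partial derivative in the second variable
  have hpart : ∀ (u : EuclideanSpace ℝ (Fin n)) (v : EuclideanSpace ℝ (Fin m)),
      HasFDerivAt (g u)
      ((fderiv ℝ (fun p : EuclideanSpace ℝ (Fin n) × EuclideanSpace ℝ (Fin m) =>
        g p.1 p.2) (u, v)).comp
        (ContinuousLinearMap.inr ℝ (EuclideanSpace ℝ (Fin n)) (EuclideanSpace ℝ (Fin m)))) v :=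
    fun u v => (hGdiff (u, v)).hasFDerivAt.comp v (hasFDerivAt_prodMk_right u v)
  have hdiffgu : ∀ (u : EuclideanSpace ℝ (Fin n)) (v : EuclideanSpace ℝ (Fin m)),
      DifferentiableAt ℝ (g u) v := fun u v => (hpart u v).differentiableAt
  -- joint continuity of the gradient
  have hgradeq : (fun p : EuclideanSpace ℝ (Fin n) × EuclideanSpace ℝ (Fin m) =>
      gradient (g p.1) p.2) =
      fun p : EuclideanSpace ℝ (Fin n) × EuclideanSpace ℝ (Fin m) =>
        (InnerProductSpace.toDual ℝ (EuclideanSpace ℝ (Fin m))).symm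
        ((fderiv ℝ (fun q : EuclideanSpace ℝ (Fin n) × EuclideanSpace ℝ (Fin m) =>
          g q.1 q.2) p).comp
          (ContinuousLinearMap.inr ℝ (EuclideanSpace ℝ (Fin n)) (EuclideanSpace ℝ (Fin m)))) := by
    funext p
    rw [gradient, (hpart p.1 p.2).fderiv]
  have hcontgrad : Continuous (fun p : EuclideanSpace ℝ (Fin n) × EuclideanSpace ℝ (Fin m) =>
      gradient (g p.1) p.2) := by
    rw [hgradeq]
    exact (InnerProductSpace.toDual ℝ (EuclideanSpace ℝ (Fin m))).symm.continuous.comp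
      ((hg.continuous_fderiv one_ne_zero).clm_comp continuous_const)
  -- gradient vanishes at the lower-level minimizer
  have hgradstar : ∀ u, gradient (g u) (vstar u) = 0 := by
    intro u
    have hlm : IsLocalMin (g u) (vstar u) := Eventually.of_forall (hvstar u).1
    rw [gradient, hlm.fderiv_eq_zero, map_zero]
  -- key bound
  have hkey : ∀ k, f (uhat k) (vhat k) +
      (γ k / 2) * ‖gradient (g (uhat k)) (vhat k)‖ ^ 2 ≤ f ustar (vstar ustar) := by
    intro k
    have := hmin k ustar (vstar ustar)
    rwa [hgradstar ustar, norm_zero, zero_pow (by norm_num), mul_zero, add_zero] at this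
  have hfbound : ∀ k, f (uhat k) (vhat k) ≤ f ustar (vstar ustar) := by
    intro k
    have hpen : 0 ≤ (γ k / 2) * ‖gradient (g (uhat k)) (vhat k)‖ ^ 2 :=
      mul_nonneg (by linarith [hγpos k]) (by positivity)
    linarith [hkey k]
  -- limits along the subsequence
  have hflim : Tendsto (fun j => f (uhat (φ j)) (vhat (φ j))) atTop (𝓝 (f ubar vbar)) :=
    (hf.tendsto (ubar, vbar)).comp hlim
  have hglim0 : Tendsto (fun j => gradient (g (uhat (φ j))) (vhat (φ j))) atTop
      (𝓝 (gradient (g ubar) vbar)) := (hcontgrad.tendsto (ubar, vbar)).comp hlim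
  have hglim : Tendsto (fun j => ‖gradient (g (uhat (φ j))) (vhat (φ j))‖ ^ 2) atTop
      (𝓝 (‖gradient (g ubar) vbar‖ ^ 2)) := hglim0.norm.pow 2
  -- the limiting gradient is zero
  have hgradbar : gradient (g ubar) vbar = 0 := by
    by_contra hne
    have hpos : (0:ℝ) < ‖gradient (g ubar) vbar‖ ^ 2 := pow_pos (norm_pos_iff.mpr hne) 2
    have hγφ : Tendsto (fun j => γ (φ j) / 2) atTop atTop :=
      (hγlim.comp hφ.tendsto_atTop).atTop_div_const (by norm_num)
    have htop : Tendsto (fun j => f (uhat (φ j)) (vhat (φ j)) +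
        (γ (φ j) / 2) * ‖gradient (g (uhat (φ j))) (vhat (φ j))‖ ^ 2) atTop atTop :=
      hflim.add_atTop (hγφ.atTop_mul_pos hpos hglim)
    obtain ⟨j, hj⟩ := (htop.eventually_ge_atTop (f ustar (vstar ustar) + 1)).exists
    linarith [hkey (φ j)]
  -- conclusions
  have hminbar : ∀ v, g ubar vbar ≤ g ubar v :=
    isMin_of_gradient_eq_zero (hconv ubar) (hdiffgu ubar vbar) hgradbar
  have hveq : vbar = vstar ubar := (hvstar ubar).2 vbar hminbar
  refine ⟨hveq, fun u => ?_⟩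
  have hfle : f ubar vbar ≤ f ustar (vstar ustar) :=
    le_of_tendsto hflim (Eventually.of_forall fun j => hfbound (φ j))
  exact hfle.trans (hustar u)
end

section
/- Let f : ℝⁿ × ℝᵐ → ℝ be continuously differentiable and g : ℝⁿ × ℝᵐ → ℝ be twice continuously differentiable, fix u ∈ ℝⁿ, γ > 0 and λ ∈ ℝ, and suppose v̂ ∈ ℝᵐ satisfies the regularized first-order condition ∇_v f(u,v̂) + γ ∇²_vv g(u,v̂) ∇_v g(u,v̂) + λ ∇_v g(u,v̂) = 0 (i.e., v̂ is a stationary point of v ↦ f̃(u,v;γ) + λ g(u,v)). If the operator γ ∇²_vv g(u,v̂) + λ I is invertible on ℝᵐ, then the u-gradient of the penalty function satisfies the regularized hypergradient formula ∇_u f̃(u,v̂;γ) = ∇_u f(u,v̂) − ∇²_uv g(u,v̂) (∇²_vv g(u,v̂) + (λ/γ) I)⁻¹ ∇_v f(u,v̂). -/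
open scoped Topology
open InnerProductSpace ContinuousLinearMap

/-- **Regularized hypergradient formula.**
Let `f : ℝⁿ × ℝᵐ → ℝ` be `C¹` and `g : ℝⁿ × ℝᵐ → ℝ` be `C²` (curried form), fix `u`,
`γ > 0`, and `λ ∈ ℝ`. Suppose `v̂` satisfies the regularized first-order condition
`∇_v f(u,v̂) + γ ∇²_vv g(u,v̂) ∇_v g(u,v̂) + λ ∇_v g(u,v̂) = 0` (i.e. `v̂` is a stationary
point of `v ↦ f̃(u,v;γ) + λ g(u,v)`). If `γ ∇²_vv g(u,v̂) + λ I` is invertible on `ℝᵐ`,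
then `∇_u f̃(u,v̂;γ) = ∇_u f(u,v̂) − ∇²_uv g(u,v̂) (∇²_vv g(u,v̂) + (λ/γ) I)⁻¹ ∇_v f(u,v̂)`
(inverse taken via `Ring.inverse`). -/
theorem regularized_hypergradient_formula
    {n m : ℕ}
    (f g : EuclideanSpace ℝ (Fin n) → EuclideanSpace ℝ (Fin m) → ℝ)
    (hf : ContDiff ℝ 1 (fun p : EuclideanSpace ℝ (Fin n) × EuclideanSpace ℝ (Fin m) =>
      f p.1 p.2))
    (hg : ContDiff ℝ 2 (fun p : EuclideanSpace ℝ (Fin n) × EuclideanSpace ℝ (Fin m) =>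
      g p.1 p.2))
    (u : EuclideanSpace ℝ (Fin n)) (γ lam : ℝ) (hγ : 0 < γ)
    (vhat : EuclideanSpace ℝ (Fin m))
    (hstat : gradient (f u) vhat +
        γ • (fderiv ℝ (gradient (g u)) vhat) (gradient (g u) vhat) +
        lam • gradient (g u) vhat = 0)
    (hinv : IsUnit (γ • fderiv ℝ (gradient (g u)) vhat +
      lam • ContinuousLinearMap.id ℝ (EuclideanSpace ℝ (Fin m)))) :
    gradient (fun u' => f u' vhat + (γ / 2) * ‖gradient (g u') vhat‖ ^ 2) u =
      gradient (fun u' => f u' vhat) u -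
        (ContinuousLinearMap.adjoint (fderiv ℝ (fun u' => gradient (g u') vhat) u))
          (Ring.inverse
            (fderiv ℝ (gradient (g u)) vhat +
              (lam / γ) • ContinuousLinearMap.id ℝ (EuclideanSpace ℝ (Fin m)))
            (gradient (f u) vhat)) := by
  set F : EuclideanSpace ℝ (Fin n) × EuclideanSpace ℝ (Fin m) → ℝ :=
    fun p => g p.1 p.2 with hF
  -- formula for gradient of g u' at vhat
  have hGfun : (fun u' : EuclideanSpace ℝ (Fin n) => gradient (g u') vhat) = fun u' =>
      (InnerProductSpace.toDual ℝ (EuclideanSpace ℝ (Fin m))).symm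
        ((fderiv ℝ F (u', vhat)).comp
          (ContinuousLinearMap.inr ℝ (EuclideanSpace ℝ (Fin n)) (EuclideanSpace ℝ (Fin m)))) := by
    funext u'
    have hFd : HasFDerivAt (fun v => F (u', v))
        ((fderiv ℝ F (u', vhat)).comp
          (ContinuousLinearMap.inr ℝ (EuclideanSpace ℝ (Fin n)) (EuclideanSpace ℝ (Fin m))))
        vhat :=
      ((hg.differentiable (by norm_num) (u', vhat)).hasFDerivAt).comp vhat
        (hasFDerivAt_prodMk_right u' vhat)
    have he : g u' = fun v => F (u', v) := rfl
    rw [gradient, he, hFd.fderiv]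
  -- differentiability of f u' vhat in u'
  have hfd : DifferentiableAt ℝ (fun u' => f u' vhat) u :=
    (((hf.differentiable one_ne_zero) (u, vhat)).comp u
      (differentiableAt_id.prodMk (differentiableAt_const vhat)) :
      DifferentiableAt ℝ ((fun p : EuclideanSpace ℝ (Fin n) × EuclideanSpace ℝ (Fin m) =>
        f p.1 p.2) ∘ fun u' => (u', vhat)) u)
  -- differentiability of the v-gradient map in u'
  have hdF : ContDiff ℝ 1 (fderiv ℝ F) := hg.fderiv_right (le_of_eq (by norm_num))
  have hGd : DifferentiableAt ℝ (fun u' => gradient (g u') vhat) u := by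
    rw [hGfun]
    exact (InnerProductSpace.toDual ℝ (EuclideanSpace ℝ (Fin m))).symm.differentiableAt.comp u
      ((((hdF.differentiable one_ne_zero) (u, vhat)).comp u
        (differentiableAt_id.prodMk (differentiableAt_const vhat))).clm_comp
        (differentiableAt_const _))
  set q := gradient (g u) vhat with hq
  set B := fderiv ℝ (fun u' => gradient (g u') vhat) u with hB
  set A := fderiv ℝ (gradient (g u)) vhat with hA
  set gf := gradient (fun u' => f u' vhat) u with hgf
  -- LHS computation
  have hBq : HasFDerivAt (fun u' => gradient (g u') vhat) B u := hGd.hasFDerivAt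
  have hnorm : HasFDerivAt (fun u' => ‖gradient (g u') vhat‖ ^ 2)
      ((fderivInnerCLM ℝ (q, q)).comp (B.prod B)) u := by
    have := hBq.inner ℝ hBq
    simpa only [real_inner_self_eq_norm_sq] using this
  have hsum : HasFDerivAt
      (fun u' => f u' vhat + (γ / 2) * ‖gradient (g u') vhat‖ ^ 2)
      ((InnerProductSpace.toDual ℝ (EuclideanSpace ℝ (Fin n))) gf +
        (γ / 2) • ((fderivInnerCLM ℝ (q, q)).comp (B.prod B))) u :=
    hfd.hasGradientAt.hasFDerivAt.add (hnorm.const_mul (γ / 2))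
  have hLHS : gradient (fun u' => f u' vhat + (γ / 2) * ‖gradient (g u') vhat‖ ^ 2) u
      = gf + γ • (ContinuousLinearMap.adjoint B) q := by
    have hgr : HasGradientAt (fun u' => f u' vhat + (γ / 2) * ‖gradient (g u') vhat‖ ^ 2)
        (gf + γ • (ContinuousLinearMap.adjoint B) q) u := by
      rw [hasGradientAt_iff_hasFDerivAt]
      convert hsum using 1
      · rfl
      · rfl
      ext w
      simp only [InnerProductSpace.toDual_apply_apply, ContinuousLinearMap.add_apply,
        ContinuousLinearMap.smul_apply, ContinuousLinearMap.comp_apply,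
        ContinuousLinearMap.prod_apply, fderivInnerCLM_apply, smul_eq_mul]
      rw [inner_add_left, real_inner_smul_left, ContinuousLinearMap.adjoint_inner_left]
      rw [real_inner_comm (B w) q]
      ring
    exact hgr.gradient
  -- the inverse computation
  have hγ0 : γ ≠ 0 := ne_of_gt hγ
  set N := A + (lam / γ) • ContinuousLinearMap.id ℝ (EuclideanSpace ℝ (Fin m)) with hN
  set M := γ • A + lam • ContinuousLinearMap.id ℝ (EuclideanSpace ℝ (Fin m)) with hM
  have hNM : N = ((γ⁻¹ • 1 : EuclideanSpace ℝ (Fin m) →L[ℝ] EuclideanSpace ℝ (Fin m))) * M := by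
    ext w
    simp only [hN, hM, ContinuousLinearMap.add_apply, ContinuousLinearMap.smul_apply,
      ContinuousLinearMap.mul_apply, ContinuousLinearMap.one_apply,
      ContinuousLinearMap.id_apply, smul_add, smul_smul]
    rw [inv_mul_cancel₀ hγ0, div_eq_inv_mul]
    simp
  have hunit_smul :
      IsUnit ((γ⁻¹ • 1 : EuclideanSpace ℝ (Fin m) →L[ℝ] EuclideanSpace ℝ (Fin m))) := by
    refine isUnit_iff_exists.mpr
      ⟨(γ • 1 : EuclideanSpace ℝ (Fin m) →L[ℝ] EuclideanSpace ℝ (Fin m)), ?_, ?_⟩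
    · ext w
      simp only [ContinuousLinearMap.mul_apply, ContinuousLinearMap.smul_apply,
        ContinuousLinearMap.one_apply, smul_smul]
      rw [inv_mul_cancel₀ hγ0, one_smul]
    · ext w
      simp only [ContinuousLinearMap.mul_apply, ContinuousLinearMap.smul_apply,
        ContinuousLinearMap.one_apply, smul_smul]
      rw [mul_inv_cancel₀ hγ0, one_smul]
  have hNunit : IsUnit N := hNM ▸ hunit_smul.mul hinv
  have hNval : N ((-γ) • q) = gradient (f u) vhat := by
    have h0 : gradient (f u) vhat = -(γ • A q + lam • q) := by
      have h := hstat
      rw [add_assoc] at h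
      exact eq_neg_of_add_eq_zero_left h
    rw [h0]
    simp only [hN, ContinuousLinearMap.add_apply, ContinuousLinearMap.smul_apply,
      ContinuousLinearMap.id_apply, map_smul]
    rw [smul_add, smul_smul]
    have hsc : -γ * (lam / γ) = -lam := by field_simp
    rw [hsc]
    module
  have hRinv : Ring.inverse N (gradient (f u) vhat) = (-γ) • q := by
    rw [← hNval]
    have hone : Ring.inverse N * N = 1 := Ring.inverse_mul_cancel _ hNunit
    calc Ring.inverse N (N ((-γ) • q)) = (Ring.inverse N * N) ((-γ) • q) := rfl
      _ = (-γ) • q := by rw [hone]; rfl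
  rw [hLHS, hRinv, map_smul]
  module
end
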